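/- arXiv:2510.20404 — 4 statements merged into one kernel-verified Lean document; each statement's English description precedes it below -/
import Mathlib

section
/- Suppose P(A=1 | Z,U,L) = b(U,L) + c(Z,L) and Z ⊥ U | L. Then for any bounded measurable π(Z,L), the conditional covariance Cov(A, π(Z,L) | U, L) is a function of (Z-marginal quantities and) L alone; in particular Cov(A, π(Z,L) | U, L) = Cov(A, π(Z,L) | L) almost surely. -/
open MeasureTheory ProbabilityTheory

/-- The σ-algebra generated by a random variable. -/
abbrev mV {Ω β : Type*} [MeasurableSpace β] (X : Ω → β) : MeasurableSpace Ω :=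
  MeasurableSpace.comap X inferInstance

open MeasurableSpace
open scoped NNReal ENNReal

section Helpers

variable {Ω : Type*} {m : MeasurableSpace Ω} [mΩ : MeasurableSpace Ω] {μ : Measure Ω}
  [IsFiniteMeasure μ]

/-- Helper: bounded a.e.-strongly-measurable functions are integrable. -/
lemma integrable_of_bound {g : Ω → ℝ} (hg : AEStronglyMeasurable g μ) (M : ℝ)
    (hbd : ∀ᵐ ω ∂μ, |g ω| ≤ M) : Integrable g μ :=
  ⟨hg, HasFiniteIntegral.of_bounded (C := M) (by simpa [Real.norm_eq_abs] using hbd)⟩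

/-- Helper: two integrable functions with equal integrals on a generating π-system (and on univ)
have equal integrals on every measurable set of the generated σ-algebra. -/
lemma setIntegral_eq_of_piSystem (hm : m ≤ mΩ)
    {P : Set (Set Ω)} (hP : IsPiSystem P) (hgen : m = MeasurableSpace.generateFrom P)
    {g h : Ω → ℝ} (hg : Integrable g μ) (hh : Integrable h μ)
    (huniv : ∫ x, g x ∂μ = ∫ x, h x ∂μ)
    (hbasic : ∀ s ∈ P, ∫ x in s, g x ∂μ = ∫ x in s, h x ∂μ) :
    ∀ s, MeasurableSet[m] s → ∫ x in s, g x ∂μ = ∫ x in s, h x ∂μ := by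
  have hcompl : ∀ t, MeasurableSet[m] t → (∫ x in t, g x ∂μ = ∫ x in t, h x ∂μ) →
      ∫ x in tᶜ, g x ∂μ = ∫ x in tᶜ, h x ∂μ := by
    intro t ht hteq
    have h1 := integral_add_compl (hm _ ht) hg
    have h2 := integral_add_compl (hm _ ht) hh
    linarith [huniv]
  have hunion : ∀ f : ℕ → Set Ω, Pairwise (Function.onFun Disjoint f) →
      (∀ i, MeasurableSet[m] (f i)) → (∀ i, ∫ x in f i, g x ∂μ = ∫ x in f i, h x ∂μ) →
      ∫ x in ⋃ i, f i, g x ∂μ = ∫ x in ⋃ i, f i, h x ∂μ := by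
    intro f hdisj hmeas heq
    rw [integral_iUnion (fun i => hm _ (hmeas i)) hdisj hg.integrableOn,
      integral_iUnion (fun i => hm _ (hmeas i)) hdisj hh.integrableOn]
    exact tsum_congr heq
  intro s hs
  exact MeasurableSpace.induction_on_inter
    (C := fun s _ => ∫ x in s, g x ∂μ = ∫ x in s, h x ∂μ) hgen hP (by simp) hbasic hcompl
    (fun f hd hfm heq => hunion f hd hfm heq) s hs

/-- The sup of two comap σ-algebras is generated by the π-system of rectangle preimages. -/
lemma sup_comap_eq_generateFrom {X Y : Ω → ℝ} :
    (mV X ⊔ mV Y : MeasurableSpace Ω) = MeasurableSpace.generateFrom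
      {s | ∃ B C : Set ℝ, MeasurableSet B ∧ MeasurableSet C ∧ s = X ⁻¹' B ∩ Y ⁻¹' C} := by
  apply le_antisymm
  · refine sup_le ?_ ?_
    · rintro s ⟨B, hB, rfl⟩
      exact measurableSet_generateFrom ⟨B, Set.univ, hB, MeasurableSet.univ, by simp⟩
    · rintro s ⟨C, hC, rfl⟩
      exact measurableSet_generateFrom ⟨Set.univ, C, MeasurableSet.univ, hC, by simp⟩
  · refine MeasurableSpace.generateFrom_le ?_
    rintro s ⟨B, C, hB, hC, rfl⟩
    exact ((le_sup_left : mV X ≤ mV X ⊔ mV Y) _ ⟨B, hB, rfl⟩).inter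
      ((le_sup_right : mV Y ≤ mV X ⊔ mV Y) _ ⟨C, hC, rfl⟩)

lemma isPiSystem_rect {X Y : Ω → ℝ} :
    IsPiSystem {s : Set Ω | ∃ B C : Set ℝ, MeasurableSet B ∧ MeasurableSet C ∧ s = X ⁻¹' B ∩ Y ⁻¹' C} := by
  rintro s ⟨B, C, hB, hC, rfl⟩ t ⟨B', C', hB', hC', rfl⟩ -
  exact ⟨B ∩ B', C ∩ C', hB.inter hB', hC.inter hC', by simp [Set.preimage_inter]; ac_rfl⟩

/-- clamp inequality -/
lemma abs_clamp_add_clamp_le (n : ℝ) (hn : 0 ≤ n) (a b : ℝ) :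
    |max (-n) (min n a) + max (-n) (min n b)| ≤ |a + b| := by
  rcases abs_cases (a + b) with ⟨h1, h2⟩ | ⟨h1, h2⟩ <;>
  · rw [abs_le] <;> constructor <;>
    · simp only [max_def, min_def] <;> split_ifs <;> linarith

lemma abs_indicator_one_le (s : Set Ω) (ω : Ω) :
    |Set.indicator s (fun _ => (1 : ℝ)) ω| ≤ 1 := by
  by_cases h : ω ∈ s <;> simp [Set.indicator_apply, h]

section Tower

variable [StandardBorelSpace Ω] [IsProbabilityMeasure μ] {Z U L : Ω → ℝ}

/-- Tower for a `U`-indicator over `σ(Z, L)`, from `Z ⊥ U | L`. -/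
lemma condexp_indicator_sup_of_condIndepFun
    (hZ : Measurable Z) (hU : Measurable U) (hL : Measurable L)
    (hZU : CondIndepFun (mV L) (measurable_iff_comap_le.mp hL) Z U μ)
    {B : Set ℝ} (hB : MeasurableSet B) :
    μ[Set.indicator (U ⁻¹' B) (fun _ => (1 : ℝ)) | mV Z ⊔ mV L]
      =ᵐ[μ] μ[Set.indicator (U ⁻¹' B) (fun _ => (1 : ℝ)) | mV L] := by
  have hmL : mV L ≤ mΩ := measurable_iff_comap_le.mp hL
  have hmZL : mV Z ⊔ mV L ≤ mΩ := sup_le (measurable_iff_comap_le.mp hZ) hmL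
  set I_U : Ω → ℝ := Set.indicator (U ⁻¹' B) (fun _ => (1 : ℝ)) with hI_U
  have hIU_meas : Measurable I_U := measurable_const.indicator (hU hB)
  have hIU_int : Integrable I_U μ :=
    integrable_of_bound hIU_meas.aestronglyMeasurable 1
      (.of_forall (abs_indicator_one_le _))
  set eU : Ω → ℝ := μ[I_U | mV L] with heU
  have heU_bd : ∀ᵐ ω ∂μ, |eU ω| ≤ ((1 : ℝ≥0) : ℝ) :=
    ae_bdd_condExp_of_ae_bdd (R := 1) (.of_forall fun ω => by
      simpa using abs_indicator_one_le (U ⁻¹' B) ω)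
  refine (ae_eq_condExp_of_forall_setIntegral_eq hmZL hIU_int
    (fun s _ _ => integrable_condExp.integrableOn) (fun s hs _ => ?_)
    (stronglyMeasurable_condExp.mono (le_sup_right : mV L ≤ mV Z ⊔ mV L)).aestronglyMeasurable).symm
  refine setIntegral_eq_of_piSystem hmZL isPiSystem_rect sup_comap_eq_generateFrom
    integrable_condExp hIU_int (integral_condExp hmL) ?_ s hs
  rintro s ⟨S, T, hS, hT, rfl⟩
  set I_Z : Ω → ℝ := Set.indicator (Z ⁻¹' S) (fun _ => (1 : ℝ)) with hI_Z
  have hIZ_meas : Measurable I_Z := measurable_const.indicator (hZ hS)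
  have hIZ_int : Integrable I_Z μ :=
    integrable_of_bound hIZ_meas.aestronglyMeasurable 1
      (.of_forall (abs_indicator_one_le _))
  set J : Ω → ℝ := Set.indicator (Z ⁻¹' S ∩ U ⁻¹' B) (fun _ => (1 : ℝ)) with hJ
  have hJ_meas : Measurable J := measurable_const.indicator ((hZ hS).inter (hU hB))
  have hJ_int : Integrable J μ :=
    integrable_of_bound hJ_meas.aestronglyMeasurable 1
      (.of_forall (abs_indicator_one_le _))
  have hTm : MeasurableSet[mV L] (L ⁻¹' T) := ⟨T, hT, rfl⟩
  have hfact := (condIndepFun_iff_condExp_inter_preimage_eq_mul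
    (hm' := measurable_iff_comap_le.mp hL) hZ hU).mp hZU S B hS hB
  -- RHS computation
  have hRHS : ∫ x in Z ⁻¹' S ∩ L ⁻¹' T, I_U x ∂μ
      = ∫ x in L ⁻¹' T, (μ[I_Z | mV L]) x * eU x ∂μ := by
    have h1 : ∫ x in Z ⁻¹' S ∩ L ⁻¹' T, I_U x ∂μ = ∫ x in L ⁻¹' T, J x ∂μ := by
      rw [← integral_indicator ((hZ hS).inter (hL hT)), ← integral_indicator (hL hT)]
      congr 1
      funext ω
      by_cases h1 : ω ∈ Z ⁻¹' S <;> by_cases h2 : ω ∈ L ⁻¹' T <;>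
        by_cases h3 : ω ∈ U ⁻¹' B <;>
        simp [hI_U, hJ, Set.indicator_apply, h1, h2, h3]
    rw [h1, ← setIntegral_condExp hmL hJ_int hTm]
    refine integral_congr_ae (ae_restrict_of_ae ?_)
    filter_upwards [hfact] with ω hω
    exact hω
  rw [hRHS]
  -- LHS computation
  have h2 : ∫ x in Z ⁻¹' S ∩ L ⁻¹' T, eU x ∂μ
      = ∫ x in L ⁻¹' T, (eU * I_Z) x ∂μ := by
    rw [← integral_indicator ((hZ hS).inter (hL hT)), ← integral_indicator (hL hT)]
    congr 1
    funext ω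
    by_cases h1 : ω ∈ Z ⁻¹' S <;> by_cases h2 : ω ∈ L ⁻¹' T <;>
      simp [hI_Z, Set.indicator_apply, h1, h2]
  have hpull : μ[eU * I_Z | mV L] =ᵐ[μ] eU * μ[I_Z | mV L] :=
    condExp_stronglyMeasurable_mul_of_bound hmL stronglyMeasurable_condExp hIZ_int 1
      (by simpa [Real.norm_eq_abs] using heU_bd)
  have heUIZ_int : Integrable (eU * I_Z) μ := by
    refine integrable_of_bound (AEStronglyMeasurable.mul ?_ hIZ_meas.aestronglyMeasurable) 1 ?_
    · exact (stronglyMeasurable_condExp.mono hmL).aestronglyMeasurable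
    · filter_upwards [heU_bd] with ω hω
      calc |eU ω * I_Z ω| = |eU ω| * |I_Z ω| := abs_mul _ _
        _ ≤ 1 * 1 := by
            refine mul_le_mul ?_ (abs_indicator_one_le _ _) (abs_nonneg _) zero_le_one
            simpa using hω
        _ = 1 := by ring
  rw [h2, ← setIntegral_condExp hmL heUIZ_int hTm]
  refine integral_congr_ae (ae_restrict_of_ae ?_)
  filter_upwards [hpull] with ω hω
  simp only [Pi.mul_apply] at hω ⊢
  rw [hω, mul_comm]

end Tower

section Tower2

variable [StandardBorelSpace Ω] [IsProbabilityMeasure μ] {Z U L : Ω → ℝ}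

/-- Tower property: for `Z ⊥ U | L` and `g` a bounded `σ(Z,L)`-measurable function,
`E[g | σ(U,L)] = E[g | σ(L)]`. -/
lemma condexp_sup_of_condIndepFun
    (hZ : Measurable Z) (hU : Measurable U) (hL : Measurable L)
    (hZU : CondIndepFun (mV L) (measurable_iff_comap_le.mp hL) Z U μ)
    {g : Ω → ℝ} (hg : StronglyMeasurable[mV Z ⊔ mV L] g) (M : ℝ)
    (hbd : ∀ᵐ ω ∂μ, |g ω| ≤ M) :
    μ[g | mV U ⊔ mV L] =ᵐ[μ] μ[g | mV L] := by
  have hmL : mV L ≤ mΩ := measurable_iff_comap_le.mp hL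
  have hmZL : mV Z ⊔ mV L ≤ mΩ := sup_le (measurable_iff_comap_le.mp hZ) hmL
  have hmUL : mV U ⊔ mV L ≤ mΩ := sup_le (measurable_iff_comap_le.mp hU) hmL
  have hg0 : AEStronglyMeasurable g μ := (hg.mono hmZL).aestronglyMeasurable
  have hg_int : Integrable g μ := integrable_of_bound hg0 M hbd
  set M' : ℝ := max M 0 with hM'
  have hbd' : ∀ᵐ ω ∂μ, |g ω| ≤ M' := hbd.mono fun ω h => h.trans (le_max_left _ _)
  refine (ae_eq_condExp_of_forall_setIntegral_eq hmUL hg_int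
    (fun s _ _ => integrable_condExp.integrableOn) (fun s hs _ => ?_)
    (stronglyMeasurable_condExp.mono (le_sup_right : mV L ≤ mV U ⊔ mV L)).aestronglyMeasurable).symm
  refine setIntegral_eq_of_piSystem hmUL isPiSystem_rect sup_comap_eq_generateFrom
    integrable_condExp hg_int (integral_condExp hmL) ?_ s hs
  rintro s ⟨B, C, hB, hC, rfl⟩
  have hLC : MeasurableSet (L ⁻¹' C) := hL hC
  have hLCm : MeasurableSet[mV L] (L ⁻¹' C) := ⟨C, hC, rfl⟩
  set I_U : Ω → ℝ := Set.indicator (U ⁻¹' B) (fun _ => (1 : ℝ)) with hI_U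
  have hIU_meas : Measurable I_U := measurable_const.indicator (hU hB)
  have hIU_int : Integrable I_U μ :=
    integrable_of_bound hIU_meas.aestronglyMeasurable 1 (.of_forall (abs_indicator_one_le _))
  set eU : Ω → ℝ := μ[I_U | mV L] with heU
  have heU_bd : ∀ᵐ ω ∂μ, |eU ω| ≤ ((1 : ℝ≥0) : ℝ) :=
    ae_bdd_condExp_of_ae_bdd (R := 1) (.of_forall fun ω => by
      simpa using abs_indicator_one_le (U ⁻¹' B) ω)
  set h : Ω → ℝ := μ[g | mV L] with hh
  set G : Ω → ℝ := Set.indicator (L ⁻¹' C) g with hG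
  set H : Ω → ℝ := Set.indicator (L ⁻¹' C) h with hH
  set F : Ω → ℝ := Set.indicator (L ⁻¹' C) eU with hF
  have hG_sm : StronglyMeasurable[mV Z ⊔ mV L] G :=
    hg.indicator (le_sup_right (a := mV Z) _ hLCm)
  have hG_bd : ∀ᵐ ω ∂μ, ‖G ω‖ ≤ M' := by
    filter_upwards [hbd'] with ω hω
    rw [Real.norm_eq_abs]
    by_cases hmem : ω ∈ L ⁻¹' C <;> simp [hG, Set.indicator_apply, hmem]
    · exact hω
    · exact le_max_right _ _
  have hF_sm : StronglyMeasurable[mV L] F := stronglyMeasurable_condExp.indicator hLCm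
  have hF_bd : ∀ᵐ ω ∂μ, ‖F ω‖ ≤ 1 := by
    filter_upwards [heU_bd] with ω hω
    rw [Real.norm_eq_abs]
    by_cases hmem : ω ∈ L ⁻¹' C <;> simp [hF, Set.indicator_apply, hmem]
    simpa using hω
  have hH_sm : StronglyMeasurable[mV L] H := stronglyMeasurable_condExp.indicator hLCm
  -- step 1
  have step1 : ∫ x in U ⁻¹' B ∩ L ⁻¹' C, g x ∂μ = ∫ x, (G * I_U) x ∂μ := by
    rw [← integral_indicator ((hU hB).inter hLC)]
    congr 1
    funext ω
    by_cases h1 : ω ∈ U ⁻¹' B <;> by_cases h2 : ω ∈ L ⁻¹' C <;>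
      simp [hG, hI_U, Set.indicator_apply, h1, h2]
  have hpull1 : μ[G * I_U | mV Z ⊔ mV L] =ᵐ[μ] G * μ[I_U | mV Z ⊔ mV L] :=
    condExp_stronglyMeasurable_mul_of_bound hmZL hG_sm hIU_int M' hG_bd
  have step2 : ∫ x, (G * I_U) x ∂μ = ∫ x, G x * (μ[I_U | mV Z ⊔ mV L]) x ∂μ := by
    rw [← integral_condExp hmZL (f := G * I_U)]
    exact integral_congr_ae hpull1
  have step3 : ∫ x, G x * (μ[I_U | mV Z ⊔ mV L]) x ∂μ = ∫ x, G x * eU x ∂μ := by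
    refine integral_congr_ae ?_
    filter_upwards [condexp_indicator_sup_of_condIndepFun hZ hU hL hZU hB] with ω hω
    rw [hω]
  have step4 : ∫ x, G x * eU x ∂μ = ∫ x, (F * g) x ∂μ := by
    congr 1
    funext ω
    by_cases hmem : ω ∈ L ⁻¹' C <;> simp [hG, hF, Set.indicator_apply, hmem, mul_comm]
  have hpull2 : μ[F * g | mV L] =ᵐ[μ] F * μ[g | mV L] :=
    condExp_stronglyMeasurable_mul_of_bound hmL hF_sm hg_int 1 hF_bd
  have step5 : ∫ x, (F * g) x ∂μ = ∫ x, (F * h) x ∂μ := by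
    rw [← integral_condExp hmL (f := F * g)]
    exact integral_congr_ae hpull2
  have step6 : ∫ x, (F * h) x ∂μ = ∫ x, (H * eU) x ∂μ := by
    congr 1
    funext ω
    by_cases hmem : ω ∈ L ⁻¹' C <;> simp [hF, hH, Set.indicator_apply, hmem, mul_comm]
  have hHIU_int : Integrable (H * I_U) μ := by
    have hh_int : Integrable h μ := integrable_condExp
    refine Integrable.mono hh_int.abs
      ((hH_sm.mono hmL).aestronglyMeasurable.mul hIU_meas.aestronglyMeasurable) (.of_forall ?_)
    intro ω
    rw [Real.norm_eq_abs, Real.norm_eq_abs, Pi.mul_apply, abs_mul, abs_abs]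
    by_cases hmem : ω ∈ L ⁻¹' C <;> by_cases h1 : ω ∈ U ⁻¹' B <;>
      simp [hH, hI_U, Set.indicator_apply, hmem, h1, abs_nonneg]
  have hpull3 : μ[H * I_U | mV L] =ᵐ[μ] H * μ[I_U | mV L] :=
    condExp_mul_of_stronglyMeasurable_left hH_sm hHIU_int hIU_int
  have step7 : ∫ x, (H * eU) x ∂μ = ∫ x, (H * I_U) x ∂μ := by
    rw [← integral_condExp hmL (f := H * I_U)]
    exact (integral_congr_ae hpull3).symm
  have step8 : ∫ x, (H * I_U) x ∂μ = ∫ x in U ⁻¹' B ∩ L ⁻¹' C, h x ∂μ := by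
    rw [← integral_indicator ((hU hB).inter hLC)]
    congr 1
    funext ω
    by_cases h1 : ω ∈ U ⁻¹' B <;> by_cases h2 : ω ∈ L ⁻¹' C <;>
      simp [hH, hI_U, Set.indicator_apply, h1, h2]
  rw [step1, step2, step3, step4, step5, step6, step7, step8]

end Tower2

lemma abs_clamp_le {n : ℝ} (hn : 0 ≤ n) (x : ℝ) : |max (-n) (min n x)| ≤ n :=
  abs_le.mpr ⟨le_max_left _ _, max_le (by linarith) (min_le_left _ _)⟩

lemma tendsto_clamp (x : ℝ) :
    Filter.Tendsto (fun n : ℕ => max (-(n : ℝ)) (min (n : ℝ) x)) Filter.atTop (nhds x) := by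
  have h := tendsto_const_nhds (x := x) (f := Filter.atTop (α := ℕ))
  refine Filter.Tendsto.congr' ?_ h
  filter_upwards [Filter.eventually_ge_atTop ⌈|x|⌉₊] with n hn
  have hx : |x| ≤ (n : ℝ) := le_trans (Nat.le_ceil _) (by exact_mod_cast hn)
  obtain ⟨h1, h2⟩ := abs_le.mp hx
  rw [min_eq_right h2, max_eq_right h1]

end Helpers

/-- Conditional covariance given a sub-σ-algebra `m`:
`Cov(X, Y | m) = E[XY | m] - E[X | m] * E[Y | m]`. -/
noncomputable def condCov {Ω : Type*} [MeasurableSpace Ω] (μ : Measure Ω)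
    (m : MeasurableSpace Ω) (X Y : Ω → ℝ) : Ω → ℝ :=
  μ[X * Y | m] - μ[X | m] * μ[Y | m]

/-- Under the additive IV condition `P(A=1|Z,U,L) = b(U,L) + c(Z,L)`
and `Z ⊥ U | L`, for any bounded measurable `π(Z,L)`,
`Cov(A, π(Z,L) | U, L) = Cov(A, π(Z,L) | L)` almost surely. -/
theorem stmt1 {Ω : Type*} [mΩ : MeasurableSpace Ω] [StandardBorelSpace Ω]
    (μ : Measure Ω) [IsProbabilityMeasure μ]
    (A Z U L : Ω → ℝ)
    (hA : Measurable A) (hZ : Measurable Z) (hU : Measurable U) (hL : Measurable L)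
    (hA01 : ∀ ω, A ω = 0 ∨ A ω = 1)
    (b c : ℝ → ℝ → ℝ)
    (hb : Measurable fun p : ℝ × ℝ => b p.1 p.2)
    (hc : Measurable fun p : ℝ × ℝ => c p.1 p.2)
    -- additive IV condition: `P(A=1 | Z,U,L) = b(U,L) + c(Z,L)`
    (hAIV : μ[A | mV Z ⊔ mV U ⊔ mV L]
      =ᵐ[μ] fun ω => b (U ω) (L ω) + c (Z ω) (L ω))
    -- IV independence: `Z ⊥ U | L`
    (hZU : CondIndepFun (mV L) (measurable_iff_comap_le.mp hL) Z U μ)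
    (π : ℝ → ℝ → ℝ) (hπ : Measurable fun p : ℝ × ℝ => π p.1 p.2)
    (Cπ : ℝ) (hπbd : ∀ z l, |π z l| ≤ Cπ) :
    condCov μ (mV U ⊔ mV L) A (fun ω => π (Z ω) (L ω))
      =ᵐ[μ] condCov μ (mV L) A (fun ω => π (Z ω) (L ω)) := by
  have hmL : mV L ≤ mΩ := measurable_iff_comap_le.mp hL
  have hmZL : mV Z ⊔ mV L ≤ mΩ := sup_le (measurable_iff_comap_le.mp hZ) hmL
  have hmUL : mV U ⊔ mV L ≤ mΩ := sup_le (measurable_iff_comap_le.mp hU) hmL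
  have hmZUL : mV Z ⊔ mV U ⊔ mV L ≤ mΩ :=
    sup_le (sup_le (measurable_iff_comap_le.mp hZ) (measurable_iff_comap_le.mp hU)) hmL
  have hUL_ZUL : mV U ⊔ mV L ≤ mV Z ⊔ mV U ⊔ mV L :=
    sup_le (le_trans le_sup_right le_sup_left) le_sup_right
  have hZL_ZUL : mV Z ⊔ mV L ≤ mV Z ⊔ mV U ⊔ mV L :=
    sup_le (le_trans le_sup_left le_sup_left) le_sup_right
  have hL_UL : mV L ≤ mV U ⊔ mV L := le_sup_right
  have hZ' : Measurable[mV Z ⊔ mV L] Z := measurable_iff_comap_le.mpr le_sup_left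
  have hL'ZL : Measurable[mV Z ⊔ mV L] L := measurable_iff_comap_le.mpr le_sup_right
  have hU' : Measurable[mV U ⊔ mV L] U := measurable_iff_comap_le.mpr le_sup_left
  have hL'UL : Measurable[mV U ⊔ mV L] L := measurable_iff_comap_le.mpr le_sup_right
  set Pz : Ω → ℝ := fun ω => π (Z ω) (L ω) with hPzdef
  have hPmeas : Measurable Pz := hπ.comp (hZ.prodMk hL)
  have hP_smZL : StronglyMeasurable[mV Z ⊔ mV L] Pz :=
    (hπ.comp (hZ'.prodMk hL'ZL)).stronglyMeasurable
  have hCπ0 : 0 ≤ Cπ := le_trans (abs_nonneg _) (hπbd 0 0)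
  have hPbd : ∀ ω, |Pz ω| ≤ Cπ := fun ω => hπbd _ _
  have hP_int : Integrable Pz μ :=
    integrable_of_bound hPmeas.aestronglyMeasurable Cπ (.of_forall hPbd)
  have hA1 : ∀ᵐ ω ∂μ, |A ω| ≤ ((1 : ℝ≥0) : ℝ) :=
    .of_forall fun ω => by rcases hA01 ω with h | h <;> simp [h]
  have hA_int : Integrable A μ :=
    integrable_of_bound hA.aestronglyMeasurable 1 (by simpa using hA1)
  set W : Ω → ℝ := μ[A | mV Z ⊔ mV U ⊔ mV L] with hWdef
  have hW_int : Integrable W μ := integrable_condExp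
  have hW_asm : AEStronglyMeasurable W μ :=
    ((stronglyMeasurable_condExp (m := mV Z ⊔ mV U ⊔ mV L)).mono hmZUL).aestronglyMeasurable
  have hW_bd : ∀ᵐ ω ∂μ, |W ω| ≤ 1 := by
    simpa using ae_bdd_condExp_of_ae_bdd (R := 1) (m := mV Z ⊔ mV U ⊔ mV L) hA1
  set p : Ω → ℝ := μ[Pz | mV L] with hpdef
  have hp_sm : StronglyMeasurable[mV L] p := stronglyMeasurable_condExp
  have hp_bd : ∀ᵐ ω ∂μ, |p ω| ≤ Cπ := by
    filter_upwards [ae_bdd_condExp_of_ae_bdd (R := ⟨Cπ, hCπ0⟩) (m := mV L)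
      (.of_forall fun ω => hPbd ω)] with ω hω
    exact hω
  set Pt : Ω → ℝ := Pz - p with hPtdef
  have hPt_smZL : StronglyMeasurable[mV Z ⊔ mV L] Pt :=
    hP_smZL.sub (hp_sm.mono le_sup_right)
  have hPt_asm : AEStronglyMeasurable Pt μ := (hPt_smZL.mono hmZL).aestronglyMeasurable
  have hPt_bd : ∀ᵐ ω ∂μ, |Pt ω| ≤ 2 * Cπ := by
    filter_upwards [hp_bd] with ω h
    calc |Pt ω| = |Pz ω + -(p ω)| := by rw [hPtdef]; simp [sub_eq_add_neg]
      _ ≤ |Pz ω| + |-(p ω)| := abs_add_le _ _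
      _ = |Pz ω| + |p ω| := by rw [abs_neg]
      _ ≤ Cπ + Cπ := add_le_add (hPbd ω) h
      _ = 2 * Cπ := by ring
  have hPt_int : Integrable Pt μ := hP_int.sub integrable_condExp
  have hp_tower : μ[Pz | mV U ⊔ mV L] =ᵐ[μ] p :=
    condexp_sup_of_condIndepFun hZ hU hL hZU hP_smZL Cπ (.of_forall hPbd)
  have hp_fix : μ[p | mV L] = p :=
    condExp_of_stronglyMeasurable hmL hp_sm integrable_condExp
  have hPt_mL : μ[Pt | mV L] =ᵐ[μ] 0 := by
    have h1 : μ[Pt | mV L] =ᵐ[μ] μ[Pz | mV L] - μ[p | mV L] := by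
      rw [hPtdef]; exact condExp_sub hP_int integrable_condExp _
    refine h1.trans ?_
    rw [hp_fix, ← hpdef, sub_self]
  have hPt_mUL : μ[Pt | mV U ⊔ mV L] =ᵐ[μ] 0 :=
    (condexp_sup_of_condIndepFun hZ hU hL hZU hPt_smZL (2 * Cπ) hPt_bd).trans hPt_mL
  -- clamped approximations
  set Bn : ℕ → Ω → ℝ := fun n ω => max (-(n : ℝ)) (min (n : ℝ) (b (U ω) (L ω))) with hBndef
  set Cn : ℕ → Ω → ℝ := fun n ω => max (-(n : ℝ)) (min (n : ℝ) (c (Z ω) (L ω))) with hCndef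
  set Wn : ℕ → Ω → ℝ := fun n => Bn n + Cn n with hWndef
  have hBn_smUL : ∀ n, StronglyMeasurable[mV U ⊔ mV L] (Bn n) := fun n =>
    (measurable_const.max (measurable_const.min
      (hb.comp (hU'.prodMk hL'UL)))).stronglyMeasurable
  have hCn_smZL : ∀ n, StronglyMeasurable[mV Z ⊔ mV L] (Cn n) := fun n =>
    (measurable_const.max (measurable_const.min
      (hc.comp (hZ'.prodMk hL'ZL)))).stronglyMeasurable
  have hBn_asm : ∀ n, AEStronglyMeasurable (Bn n) μ := fun n =>
    ((hBn_smUL n).mono hmUL).aestronglyMeasurable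
  have hCn_asm : ∀ n, AEStronglyMeasurable (Cn n) μ := fun n =>
    ((hCn_smZL n).mono hmZL).aestronglyMeasurable
  have hBn_bd : ∀ (n : ℕ) ω, |Bn n ω| ≤ (n : ℝ) := fun n ω =>
    abs_clamp_le (Nat.cast_nonneg n) _
  have hCn_bd : ∀ (n : ℕ) ω, |Cn n ω| ≤ (n : ℝ) := fun n ω =>
    abs_clamp_le (Nat.cast_nonneg n) _
  have hWn_bd : ∀ n, ∀ᵐ ω ∂μ, |Wn n ω| ≤ 1 := by
    intro n
    filter_upwards [hAIV, hW_bd] with ω h1 h2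
    have h3 : |Bn n ω + Cn n ω| ≤ |b (U ω) (L ω) + c (Z ω) (L ω)| :=
      abs_clamp_add_clamp_le _ (Nat.cast_nonneg n) _ _
    rw [← h1] at h3
    calc |Wn n ω| = |Bn n ω + Cn n ω| := by rw [hWndef]; simp
      _ ≤ |W ω| := h3
      _ ≤ 1 := h2
  have hWn_tendsto : ∀ᵐ ω ∂μ, Filter.Tendsto (fun n => Wn n ω) Filter.atTop (nhds (W ω)) := by
    filter_upwards [hAIV] with ω h1
    rw [h1]
    have h2 := (tendsto_clamp (b (U ω) (L ω))).add (tendsto_clamp (c (Z ω) (L ω)))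
    refine h2.congr fun n => ?_
    rw [hWndef]; simp [hBndef, hCndef]
  have hPtWn_int : ∀ n, Integrable (Pt * Wn n) μ := by
    intro n
    refine integrable_of_bound (hPt_asm.mul ((hBn_asm n).add (hCn_asm n))) (2 * Cπ) ?_
    filter_upwards [hPt_bd, hWn_bd n] with ω e1 e2
    rw [Pi.mul_apply, abs_mul]
    calc |Pt ω| * |Wn n ω| ≤ (2 * Cπ) * 1 :=
          mul_le_mul e1 e2 (abs_nonneg _) (by linarith)
      _ = 2 * Cπ := mul_one _
  have hPtWn_bd : ∀ n, ∀ᵐ ω ∂μ, ‖(Pt * Wn n) ω‖ ≤ 2 * Cπ := by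
    intro n
    filter_upwards [hPt_bd, hWn_bd n] with ω e1 e2
    rw [Real.norm_eq_abs, Pi.mul_apply, abs_mul]
    calc |Pt ω| * |Wn n ω| ≤ (2 * Cπ) * 1 :=
          mul_le_mul e1 e2 (abs_nonneg _) (by linarith)
      _ = 2 * Cπ := mul_one _
  -- the per-n identity
  have key : ∀ n : ℕ, μ[Pt * Wn n | mV U ⊔ mV L] =ᵐ[μ] μ[Pt * Wn n | mV L] := by
    intro n
    have hsplit : Pt * Wn n = Pt * Bn n + Pt * Cn n := by
      funext ω; rw [hWndef]; simp [Pi.mul_apply, Pi.add_apply]; ring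
    have hPtBn_int : Integrable (Pt * Bn n) μ := by
      refine integrable_of_bound (hPt_asm.mul (hBn_asm n)) ((2 * Cπ) * n) ?_
      filter_upwards [hPt_bd] with ω e1
      rw [Pi.mul_apply, abs_mul]
      exact mul_le_mul e1 (hBn_bd n ω) (abs_nonneg _) (by linarith)
    have hPtCn_int : Integrable (Pt * Cn n) μ := by
      refine integrable_of_bound (hPt_asm.mul (hCn_asm n)) ((2 * Cπ) * n) ?_
      filter_upwards [hPt_bd] with ω e1
      rw [Pi.mul_apply, abs_mul]
      exact mul_le_mul e1 (hCn_bd n ω) (abs_nonneg _) (by linarith)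
    have t1 : μ[Pt * Bn n | mV U ⊔ mV L] =ᵐ[μ] 0 := by
      have hcomm : Pt * Bn n = Bn n * Pt := mul_comm _ _
      rw [hcomm]
      have hpull : μ[Bn n * Pt | mV U ⊔ mV L] =ᵐ[μ] Bn n * μ[Pt | mV U ⊔ mV L] :=
        condExp_stronglyMeasurable_mul_of_bound hmUL (hBn_smUL n) hPt_int n
          (.of_forall fun ω => by rw [Real.norm_eq_abs]; exact hBn_bd n ω)
      refine hpull.trans ?_
      filter_upwards [hPt_mUL] with ω h
      rw [Pi.mul_apply, h, Pi.zero_apply, mul_zero]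
    have t2 : μ[Pt * Cn n | mV U ⊔ mV L] =ᵐ[μ] μ[Pt * Cn n | mV L] := by
      refine condexp_sup_of_condIndepFun hZ hU hL hZU (hPt_smZL.mul (hCn_smZL n))
        ((2 * Cπ) * n) ?_
      filter_upwards [hPt_bd] with ω e1
      rw [Pi.mul_apply, abs_mul]
      exact mul_le_mul e1 (hCn_bd n ω) (abs_nonneg _) (by linarith)
    have t3 : μ[Pt * Bn n | mV L] =ᵐ[μ] 0 := by
      refine ((condExp_condExp_of_le hL_UL hmUL (f := Pt * Bn n)).symm.trans
        ((condExp_congr_ae t1).trans ?_))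
      rw [condExp_zero]
    have splitUL : μ[Pt * Wn n | mV U ⊔ mV L]
        =ᵐ[μ] μ[Pt * Bn n | mV U ⊔ mV L] + μ[Pt * Cn n | mV U ⊔ mV L] := by
      rw [hsplit]; exact condExp_add hPtBn_int hPtCn_int _
    have splitL : μ[Pt * Wn n | mV L]
        =ᵐ[μ] μ[Pt * Bn n | mV L] + μ[Pt * Cn n | mV L] := by
      rw [hsplit]; exact condExp_add hPtBn_int hPtCn_int _
    filter_upwards [splitUL, splitL, t1, t2, t3] with ω e1 e2 e3 e4 e5
    rw [e1, e2, Pi.add_apply, Pi.add_apply, e3, e4, e5]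
  -- integrability of the limit
  have hPtW_int : Integrable (Pt * W) μ := by
    refine integrable_of_bound (hPt_asm.mul hW_asm) (2 * Cπ) ?_
    filter_upwards [hPt_bd, hW_bd] with ω e1 e2
    rw [Pi.mul_apply, abs_mul]
    calc |Pt ω| * |W ω| ≤ (2 * Cπ) * 1 := mul_le_mul e1 e2 (abs_nonneg _) (by linarith)
      _ = 2 * Cπ := mul_one _
  -- the key limit identity
  have star : μ[Pt * W | mV U ⊔ mV L] =ᵐ[μ] μ[Pt * W | mV L] := by
    refine (ae_eq_condExp_of_forall_setIntegral_eq hmUL hPtW_int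
      (fun s _ _ => integrable_condExp.integrableOn) (fun s hs _ => ?_)
      ((stronglyMeasurable_condExp.mono hL_UL).aestronglyMeasurable)).symm
    have hs' : MeasurableSet s := hmUL _ hs
    have htend : ∀ᵐ ω ∂μ, Filter.Tendsto (fun n => (Pt * Wn n) ω) Filter.atTop
        (nhds ((Pt * W) ω)) := by
      filter_upwards [hWn_tendsto] with ω h
      simpa [Pi.mul_apply] using h.const_mul (Pt ω)
    have hlim1 : Filter.Tendsto (fun n => ∫ x in s, (μ[Pt * Wn n | mV L]) x ∂μ)
        Filter.atTop (nhds (∫ x in s, (μ[Pt * W | mV L]) x ∂μ)) := by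
      have hc : Filter.Tendsto (fun n => condExpL1 hmL μ (Pt * Wn n)) Filter.atTop
          (nhds (condExpL1 hmL μ (Pt * W))) :=
        tendsto_condExpL1_of_dominated_convergence hmL (fun _ => 2 * Cπ)
          (fun n => (hPtWn_int n).aestronglyMeasurable) (integrable_const _)
          hPtWn_bd htend
      have hcont := ((continuous_setIntegral (μ := μ) (E := ℝ) s).tendsto
        (condExpL1 hmL μ (Pt * W))).comp hc
      have heq2 : ∫ x in s, (condExpL1 hmL μ (Pt * W) : Ω → ℝ) x ∂μ
          = ∫ x in s, (μ[Pt * W | mV L]) x ∂μ :=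
        integral_congr_ae (ae_restrict_of_ae (condExp_ae_eq_condExpL1 hmL (Pt * W)).symm)
      rw [← heq2]
      refine hcont.congr fun n => ?_
      exact integral_congr_ae
        (ae_restrict_of_ae (condExp_ae_eq_condExpL1 hmL (Pt * Wn n)).symm)
    have hlim2 : Filter.Tendsto (fun n => ∫ x in s, (μ[Pt * Wn n | mV L]) x ∂μ)
        Filter.atTop (nhds (∫ x in s, (Pt * W) x ∂μ)) := by
      have hdct : Filter.Tendsto (fun n => ∫ x in s, (Pt * Wn n) x ∂μ) Filter.atTop
          (nhds (∫ x in s, (Pt * W) x ∂μ)) :=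
        tendsto_integral_of_dominated_convergence (μ := μ.restrict s) (fun _ => 2 * Cπ)
          (fun n => (hPtWn_int n).aestronglyMeasurable.restrict) (integrable_const _)
          (fun n => ae_restrict_of_ae (hPtWn_bd n)) (ae_restrict_of_ae htend)
      refine hdct.congr fun n => ?_
      calc ∫ x in s, (Pt * Wn n) x ∂μ
          = ∫ x in s, (μ[Pt * Wn n | mV U ⊔ mV L]) x ∂μ :=
            (setIntegral_condExp hmUL (hPtWn_int n) hs).symm
        _ = ∫ x in s, (μ[Pt * Wn n | mV L]) x ∂μ :=
            integral_congr_ae (ae_restrict_of_ae (key n))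
    exact tendsto_nhds_unique hlim1 hlim2
  -- final assembly
  have hcomm : A * Pz = Pz * A := mul_comm _ _
  have hpullZUL : μ[A * Pz | mV Z ⊔ mV U ⊔ mV L] =ᵐ[μ] Pz * W := by
    rw [hcomm]
    exact condExp_stronglyMeasurable_mul_of_bound hmZUL (hP_smZL.mono hZL_ZUL) hA_int Cπ
      (.of_forall fun ω => by rw [Real.norm_eq_abs]; exact hPbd ω)
  have hAP_UL : μ[A * Pz | mV U ⊔ mV L] =ᵐ[μ] μ[Pz * W | mV U ⊔ mV L] :=
    (condExp_condExp_of_le hUL_ZUL hmZUL).symm.trans (condExp_congr_ae hpullZUL)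
  have hAP_L : μ[A * Pz | mV L] =ᵐ[μ] μ[Pz * W | mV L] :=
    (condExp_condExp_of_le (hL_UL.trans hUL_ZUL) hmZUL).symm.trans (condExp_congr_ae hpullZUL)
  have hA_UL : μ[A | mV U ⊔ mV L] =ᵐ[μ] μ[W | mV U ⊔ mV L] :=
    (condExp_condExp_of_le hUL_ZUL hmZUL).symm
  have hA_L : μ[A | mV L] =ᵐ[μ] μ[W | mV L] :=
    (condExp_condExp_of_le (hL_UL.trans hUL_ZUL) hmZUL).symm
  have hdecomp : Pz * W = Pt * W + p * W := by
    funext ω; rw [hPtdef]; simp [Pi.mul_apply, Pi.add_apply, Pi.sub_apply]; ring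
  have hpW_int : Integrable (p * W) μ := by
    refine integrable_of_bound ((hp_sm.mono hmL).aestronglyMeasurable.mul hW_asm) Cπ ?_
    filter_upwards [hp_bd, hW_bd] with ω e1 e2
    rw [Pi.mul_apply, abs_mul]
    calc |p ω| * |W ω| ≤ Cπ * 1 := mul_le_mul e1 e2 (abs_nonneg _) hCπ0
      _ = Cπ := mul_one _
  have hsplit_UL : μ[Pz * W | mV U ⊔ mV L]
      =ᵐ[μ] μ[Pt * W | mV U ⊔ mV L] + μ[p * W | mV U ⊔ mV L] := by
    rw [hdecomp]; exact condExp_add hPtW_int hpW_int _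
  have hsplit_L : μ[Pz * W | mV L] =ᵐ[μ] μ[Pt * W | mV L] + μ[p * W | mV L] := by
    rw [hdecomp]; exact condExp_add hPtW_int hpW_int _
  have hpW_UL : μ[p * W | mV U ⊔ mV L] =ᵐ[μ] p * μ[W | mV U ⊔ mV L] :=
    condExp_stronglyMeasurable_mul_of_bound hmUL (hp_sm.mono hL_UL) hW_int Cπ
      (by simpa [Real.norm_eq_abs] using hp_bd)
  have hpW_L : μ[p * W | mV L] =ᵐ[μ] p * μ[W | mV L] :=
    condExp_stronglyMeasurable_mul_of_bound hmL hp_sm hW_int Cπ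
      (by simpa [Real.norm_eq_abs] using hp_bd)
  filter_upwards [hAP_UL, hAP_L, hA_UL, hA_L, hp_tower, hsplit_UL, hsplit_L, hpW_UL,
    hpW_L, star] with ω e1 e2 e3 e4 e5 e6 e7 e8 e9 e10
  simp only [condCov, Pi.sub_apply, Pi.mul_apply]
  rw [e1, e3, e5, e2, e4]
  rw [show (μ[Pz * W | mV U ⊔ mV L]) ω
      = (μ[Pt * W | mV U ⊔ mV L]) ω + (μ[p * W | mV U ⊔ mV L]) ω from by
    rw [e6, Pi.add_apply]]
  rw [show (μ[Pz * W | mV L]) ω = (μ[Pt * W | mV L]) ω + (μ[p * W | mV L]) ω from by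
    rw [e7, Pi.add_apply]]
  rw [e8, e9, Pi.mul_apply, Pi.mul_apply, e10]
  have e11 : (μ[Pz | mV L]) ω = p ω := by rw [← hpdef]
  rw [e11]
  ring
end

section
/- Let A ∈ {0,1}, and suppose that for every bounded measurable π(Z,L) we have Cov(A, π(Z,L) | U, L) = Cov(A, π(Z,L) | L) almost surely, with Z ⊥ U | L. Then P(A=1 | Z,U,L) decomposes additively: P(A=1|Z,U,L) = b(U,L) + c(Z,L) with b(U,L) = E[A|U,L] − E[A|L] and c(Z,L) = E[A|Z,L]. -/
open MeasureTheory ProbabilityTheory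

set_option linter.unusedSectionVars false
namespace Stmt2Aux

variable {Ω : Type*} [mΩ : MeasurableSpace Ω] {μ : Measure Ω} [IsProbabilityMeasure μ]

/-- real indicator -/
noncomputable abbrev ind (s : Set Ω) : Ω → ℝ := s.indicator (fun _ => (1:ℝ))

lemma ind_le (s : Set Ω) (ω : Ω) : |ind s ω| ≤ 1 := by
  by_cases h : ω ∈ s <;> simp [ind, h]

lemma ind_mul (s t : Set Ω) (ω : Ω) : ind s ω * ind t ω = ind (s ∩ t) ω := by
  by_cases hs : ω ∈ s <;> by_cases ht : ω ∈ t <;>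
    simp [ind, hs, ht, Set.indicator_of_mem, Set.indicator_of_notMem, Set.mem_inter_iff]

lemma integrable_of_bdd {f : Ω → ℝ} (hf : AEStronglyMeasurable f μ) {C : ℝ}
    (hb : ∀ᵐ ω ∂μ, |f ω| ≤ C) : Integrable f μ :=
  Integrable.mono' (integrable_const C) hf
    (by filter_upwards [hb] with ω h; simpa [Real.norm_eq_abs] using h)

lemma integrable_ind {s : Set Ω} (hs : MeasurableSet s) : Integrable (ind s) μ :=
  (integrable_const (1:ℝ)).indicator hs

lemma setIntegral_eq_integral_mul_ind (F : Ω → ℝ) {t : Set Ω} (ht : MeasurableSet t) :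
    ∫ ω in t, F ω ∂μ = ∫ ω, F ω * ind t ω ∂μ := by
  rw [← integral_indicator ht]
  refine integral_congr_ae (Filter.Eventually.of_forall fun ω => ?_)
  by_cases h : ω ∈ t <;> simp [ind, h]

/-- key: integrate bounded `m`-measurable factor against `X` vs against `E[X|m]`. -/
lemma integral_mul_condexp {m : MeasurableSpace Ω} (hm : m ≤ mΩ) {φ X : Ω → ℝ}
    (hφ : StronglyMeasurable[m] φ) {C : ℝ} (hφb : ∀ᵐ ω ∂μ, |φ ω| ≤ C)
    (hX : Integrable X μ) :
    ∫ ω, φ ω * X ω ∂μ = ∫ ω, φ ω * (μ[X|m]) ω ∂μ := by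
  have hb' : ∀ᵐ ω ∂μ, ‖φ ω‖ ≤ C := by simpa [Real.norm_eq_abs] using hφb
  have h1 : Integrable (φ * X) μ :=
    hX.bdd_mul (hφ.mono hm).aestronglyMeasurable hb'
  have h2 := condExp_stronglyMeasurable_mul_of_bound hm hφ hX C hb'
  calc ∫ ω, φ ω * X ω ∂μ = ∫ ω, (μ[φ * X|m]) ω ∂μ := (integral_condExp hm).symm
    _ = ∫ ω, φ ω * (μ[X|m]) ω ∂μ := integral_congr_ae h2

lemma eq_on_generated {m : MeasurableSpace Ω} (hm : m ≤ mΩ) {S : Set (Set Ω)}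
    (hgen : m = MeasurableSpace.generateFrom S) (hpi : IsPiSystem S)
    {f g : Ω → ℝ} (hf : Integrable f μ) (hg : Integrable g μ)
    (huniv : ∫ ω, f ω ∂μ = ∫ ω, g ω ∂μ)
    (hS : ∀ t ∈ S, ∫ ω in t, f ω ∂μ = ∫ ω in t, g ω ∂μ) :
    ∀ t, MeasurableSet[m] t → ∫ ω in t, f ω ∂μ = ∫ ω in t, g ω ∂μ := by
  intro t ht
  refine @MeasurableSpace.induction_on_inter Ω m
    (fun t _ => ∫ ω in t, f ω ∂μ = ∫ ω in t, g ω ∂μ) S hgen hpi (by simp) hS ?_ ?_ t ht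
  · intro u hu hint
    have hu' : MeasurableSet[mΩ] u := hm _ hu
    clear hu hS hpi hgen ht hm
    clear m
    have h1 := integral_add_compl hu' hf
    have h2 := integral_add_compl hu' hg
    linarith
  · intro fs hdisj hmeas heq
    have hmeas' : ∀ i, MeasurableSet[mΩ] (fs i) := fun i => hm _ (hmeas i)
    clear hmeas hS hpi hgen ht hm
    clear m
    rw [integral_iUnion hmeas' hdisj hf.integrableOn,
      integral_iUnion hmeas' hdisj hg.integrableOn]
    exact tsum_congr heq

end Stmt2Aux

namespace Stmt2Aux

variable {Ω : Type*} [mΩ : MeasurableSpace Ω] {μ : Measure Ω} [IsProbabilityMeasure μ]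

/-- rectangles for two functions -/
def S2 (X Y : Ω → ℝ) : Set (Set Ω) :=
  {s | ∃ B C : Set ℝ, MeasurableSet B ∧ MeasurableSet C ∧ s = X ⁻¹' B ∩ Y ⁻¹' C}

lemma isPiSystem_S2 (X Y : Ω → ℝ) : IsPiSystem (S2 X Y) := by
  rintro s ⟨B, C, hB, hC, rfl⟩ t ⟨B', C', hB', hC', rfl⟩ -
  refine ⟨B ∩ B', C ∩ C', hB.inter hB', hC.inter hC', ?_⟩
  ext ω; simp [Set.mem_inter_iff]; tauto

lemma gen_S2 {X Y : Ω → ℝ} (hX : Measurable X) (hY : Measurable Y) :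
    (mV X ⊔ mV Y : MeasurableSpace Ω) = MeasurableSpace.generateFrom (S2 X Y) := by
  refine le_antisymm (sup_le ?_ ?_) (MeasurableSpace.generateFrom_le ?_)
  · rintro s ⟨B, hB, rfl⟩
    exact MeasurableSpace.measurableSet_generateFrom
      ⟨B, Set.univ, hB, MeasurableSet.univ, by simp⟩
  · rintro s ⟨C, hC, rfl⟩
    exact MeasurableSpace.measurableSet_generateFrom
      ⟨Set.univ, C, MeasurableSet.univ, hC, by simp⟩
  · rintro s ⟨B, C, hB, hC, rfl⟩
    have h1 : (mV X : MeasurableSpace Ω) ≤ mV X ⊔ mV Y := le_sup_left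
    have h2 : (mV Y : MeasurableSpace Ω) ≤ mV X ⊔ mV Y := le_sup_right
    exact MeasurableSet.inter (h1 _ ⟨B, hB, rfl⟩) (h2 _ ⟨C, hC, rfl⟩)

/-- rectangles for three functions -/
def S3 (X Y W : Ω → ℝ) : Set (Set Ω) :=
  {s | ∃ B C D : Set ℝ, MeasurableSet B ∧ MeasurableSet C ∧ MeasurableSet D ∧
    s = X ⁻¹' B ∩ Y ⁻¹' C ∩ W ⁻¹' D}

lemma isPiSystem_S3 (X Y W : Ω → ℝ) : IsPiSystem (S3 X Y W) := by
  rintro s ⟨B, C, D, hB, hC, hD, rfl⟩ t ⟨B', C', D', hB', hC', hD', rfl⟩ -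
  refine ⟨B ∩ B', C ∩ C', D ∩ D', hB.inter hB', hC.inter hC', hD.inter hD', ?_⟩
  ext ω; simp [Set.mem_inter_iff]; tauto

lemma gen_S3 {X Y W : Ω → ℝ} (hX : Measurable X) (hY : Measurable Y) (hW : Measurable W) :
    (mV X ⊔ mV Y ⊔ mV W : MeasurableSpace Ω) = MeasurableSpace.generateFrom (S3 X Y W) := by
  refine le_antisymm (sup_le (sup_le ?_ ?_) ?_) (MeasurableSpace.generateFrom_le ?_)
  · rintro s ⟨B, hB, rfl⟩
    exact MeasurableSpace.measurableSet_generateFrom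
      ⟨B, Set.univ, Set.univ, hB, MeasurableSet.univ, MeasurableSet.univ, by simp⟩
  · rintro s ⟨C, hC, rfl⟩
    exact MeasurableSpace.measurableSet_generateFrom
      ⟨Set.univ, C, Set.univ, MeasurableSet.univ, hC, MeasurableSet.univ, by simp⟩
  · rintro s ⟨D, hD, rfl⟩
    exact MeasurableSpace.measurableSet_generateFrom
      ⟨Set.univ, Set.univ, D, MeasurableSet.univ, MeasurableSet.univ, hD, by simp⟩
  · rintro s ⟨B, C, D, hB, hC, hD, rfl⟩
    have h1 : (mV X : MeasurableSpace Ω) ≤ mV X ⊔ mV Y ⊔ mV W := le_sup_left.trans le_sup_left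
    have h2 : (mV Y : MeasurableSpace Ω) ≤ mV X ⊔ mV Y ⊔ mV W := le_sup_right.trans le_sup_left
    have h3 : (mV W : MeasurableSpace Ω) ≤ mV X ⊔ mV Y ⊔ mV W := le_sup_right
    exact MeasurableSet.inter
      (MeasurableSet.inter (h1 _ ⟨B, hB, rfl⟩) (h2 _ ⟨C, hC, rfl⟩)) (h3 _ ⟨D, hD, rfl⟩)

end Stmt2Aux

namespace Stmt2Aux

variable {Ω : Type*} [mΩ : MeasurableSpace Ω] [StandardBorelSpace Ω]
  {μ : Measure Ω} [IsProbabilityMeasure μ]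

lemma ae_bdd_one {X : Ω → ℝ} (hX : ∀ᵐ ω ∂μ, |X ω| ≤ 1) {m : MeasurableSpace Ω} :
    ∀ᵐ ω ∂μ, |(μ[X|m]) ω| ≤ 1 := by
  have := ae_bdd_condExp_of_ae_bdd (μ := μ) (m := m) (R := 1) (f := X) (by simpa using hX)
  simpa using this

/-- `E[1_{W ∈ B} | σ(Y) ⊔ σ(L)] = E[1_{W ∈ B} | σ(L)]` when `W ⊥ Y | L`. -/
lemma condexp_ind_of_condIndep {W Y L : Ω → ℝ}
    (hW : Measurable W) (hY : Measurable Y) (hL : Measurable L)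
    (hind : CondIndepFun (mV L) (measurable_iff_comap_le.mp hL) W Y μ)
    {B : Set ℝ} (hB : MeasurableSet B) :
    μ[ind (W ⁻¹' B) | mV Y ⊔ mV L] =ᵐ[μ] μ[ind (W ⁻¹' B) | mV L] := by
  have hmL : (mV L : MeasurableSpace Ω) ≤ mΩ := measurable_iff_comap_le.mp hL
  have hmYL : (mV Y ⊔ mV L : MeasurableSpace Ω) ≤ mΩ :=
    sup_le (measurable_iff_comap_le.mp hY) hmL
  have hf_int : Integrable (ind (W ⁻¹' B)) μ := integrable_ind (hW hB)
  have hmul := (condIndepFun_iff_condExp_inter_preimage_eq_mul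
    (μ := μ) (hm' := hmL) hW hY).mp hind
  refine (ae_eq_condExp_of_forall_setIntegral_eq hmYL hf_int
    (fun s _ _ => integrable_condExp.integrableOn) ?_
    (stronglyMeasurable_condExp.mono
      (le_sup_right : (mV L : MeasurableSpace Ω) ≤ mV Y ⊔ mV L)).aestronglyMeasurable).symm
  intro s hs _
  refine eq_on_generated hmYL (gen_S2 hY hL) (isPiSystem_S2 Y L) integrable_condExp hf_int
    (integral_condExp hmL) ?_ s hs
  rintro t ⟨C, D, hC, hD, rfl⟩
  have ht_meas : MeasurableSet (Y ⁻¹' C ∩ L ⁻¹' D) := (hY hC).inter (hL hD)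
  have hD' : MeasurableSet[mV L] (L ⁻¹' D) := ⟨D, hD, rfl⟩
  have sIndL : StronglyMeasurable[mV L] (ind (L ⁻¹' D)) :=
    stronglyMeasurable_const.indicator hD'
  have hp : ∀ᵐ ω ∂μ, |(μ[ind (W ⁻¹' B)|mV L]) ω| ≤ 1 :=
    ae_bdd_one (ae_of_all _ (ind_le _))
  have hmul' := hmul B C hB hC
  calc ∫ ω in Y ⁻¹' C ∩ L ⁻¹' D, (μ[ind (W ⁻¹' B)|mV L]) ω ∂μ
      = ∫ ω, (μ[ind (W ⁻¹' B)|mV L]) ω * ind (Y ⁻¹' C ∩ L ⁻¹' D) ω ∂μ :=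
        setIntegral_eq_integral_mul_ind _ ht_meas
    _ = ∫ ω, ((μ[ind (W ⁻¹' B)|mV L]) ω * ind (L ⁻¹' D) ω) * ind (Y ⁻¹' C) ω ∂μ := by
        refine integral_congr_ae (Filter.Eventually.of_forall fun ω => ?_)
        dsimp only
        rw [← ind_mul]; ring
    _ = ∫ ω, ((μ[ind (W ⁻¹' B)|mV L]) ω * ind (L ⁻¹' D) ω)
          * (μ[ind (Y ⁻¹' C)|mV L]) ω ∂μ := by
        refine integral_mul_condexp hmL (stronglyMeasurable_condExp.mul sIndL) (C := 1)
          ?_ (integrable_ind (hY hC))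
        filter_upwards [hp] with ω h
        have h2 := ind_le (L ⁻¹' D) ω
        have h3 := abs_nonneg ((μ[ind (W ⁻¹' B)|mV L]) ω)
        rw [abs_mul]; nlinarith
    _ = ∫ ω, ind (L ⁻¹' D) ω * (μ[ind (W ⁻¹' B ∩ Y ⁻¹' C)|mV L]) ω ∂μ := by
        refine integral_congr_ae ?_
        filter_upwards [hmul'] with ω h
        rw [h]; ring
    _ = ∫ ω, ind (L ⁻¹' D) ω * ind (W ⁻¹' B ∩ Y ⁻¹' C) ω ∂μ :=
        (integral_mul_condexp hmL sIndL (C := 1) (ae_of_all _ (ind_le _))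
          (integrable_ind ((hW hB).inter (hY hC)))).symm
    _ = ∫ ω, ind (W ⁻¹' B) ω * ind (Y ⁻¹' C ∩ L ⁻¹' D) ω ∂μ := by
        refine integral_congr_ae (Filter.Eventually.of_forall fun ω => ?_)
        dsimp only
        rw [← ind_mul, ← ind_mul]; ring
    _ = ∫ ω in Y ⁻¹' C ∩ L ⁻¹' D, ind (W ⁻¹' B) ω ∂μ :=
        (setIntegral_eq_integral_mul_ind _ ht_meas).symm

end Stmt2Aux

namespace Stmt2Aux

lemma abs_mul_le_one {a b : ℝ} (ha : |a| ≤ 1) (hb : |b| ≤ 1) : |a * b| ≤ 1 := by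
  rw [abs_mul]; nlinarith [abs_nonneg a, abs_nonneg b]

lemma abs_mul_le {a b c : ℝ} (ha : |a| ≤ c) (hb : |b| ≤ 1) : |a * b| ≤ c := by
  rw [abs_mul]; nlinarith [abs_nonneg a, abs_nonneg b]

end Stmt2Aux

open Stmt2Aux

/-- (Converse direction of Proposition 1.) If for every bounded measurable
`π(Z,L)` we have `Cov(A, π(Z,L) | U, L) = Cov(A, π(Z,L) | L)` a.s., and `Z ⊥ U | L`, then
`P(A=1|Z,U,L)` decomposes additively as `b(U,L) + c(Z,L)` with
`b(U,L) = E[A|U,L] − E[A|L]` and `c(Z,L) = E[A|Z,L]`. -/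
theorem stmt2 {Ω : Type*} [mΩ : MeasurableSpace Ω] [StandardBorelSpace Ω]
    (μ : Measure Ω) [IsProbabilityMeasure μ]
    (A Z U L : Ω → ℝ)
    (hA : Measurable A) (hZ : Measurable Z) (hU : Measurable U) (hL : Measurable L)
    (hA01 : ∀ ω, A ω = 0 ∨ A ω = 1)
    -- covariance invariance for all bounded measurable weights
    (hinv : ∀ (π : ℝ → ℝ → ℝ), (Measurable fun p : ℝ × ℝ => π p.1 p.2) →
      (∃ Cπ : ℝ, ∀ z l, |π z l| ≤ Cπ) →
      condCov μ (mV U ⊔ mV L) A (fun ω => π (Z ω) (L ω))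
        =ᵐ[μ] condCov μ (mV L) A (fun ω => π (Z ω) (L ω)))
    -- IV independence: `Z ⊥ U | L`
    (hZU : CondIndepFun (mV L) (measurable_iff_comap_le.mp hL) Z U μ) :
    μ[A | mV Z ⊔ mV U ⊔ mV L]
      =ᵐ[μ] fun ω =>
        ((μ[A | mV U ⊔ mV L]) ω - (μ[A | mV L]) ω) + (μ[A | mV Z ⊔ mV L]) ω := by
  have hmL : (mV L : MeasurableSpace Ω) ≤ mΩ := measurable_iff_comap_le.mp hL
  have hmZ : (mV Z : MeasurableSpace Ω) ≤ mΩ := measurable_iff_comap_le.mp hZ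
  have hmU : (mV U : MeasurableSpace Ω) ≤ mΩ := measurable_iff_comap_le.mp hU
  have hmUL : (mV U ⊔ mV L : MeasurableSpace Ω) ≤ mΩ := sup_le hmU hmL
  have hmZL : (mV Z ⊔ mV L : MeasurableSpace Ω) ≤ mΩ := sup_le hmZ hmL
  have hmZUL : (mV Z ⊔ mV U ⊔ mV L : MeasurableSpace Ω) ≤ mΩ := sup_le (sup_le hmZ hmU) hmL
  have hULle : (mV U ⊔ mV L : MeasurableSpace Ω) ≤ mV Z ⊔ mV U ⊔ mV L :=
    sup_le (le_sup_of_le_left le_sup_right) le_sup_right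
  have hZLle : (mV Z ⊔ mV L : MeasurableSpace Ω) ≤ mV Z ⊔ mV U ⊔ mV L :=
    sup_le (le_sup_of_le_left le_sup_left) le_sup_right
  have hLle : (mV L : MeasurableSpace Ω) ≤ mV Z ⊔ mV U ⊔ mV L := le_sup_right
  have hA1 : ∀ ω, |A ω| ≤ 1 := fun ω => by rcases hA01 ω with h | h <;> simp [h]
  have hA_int : Integrable A μ := integrable_of_bdd hA.aestronglyMeasurable (ae_of_all _ hA1)
  set G : Ω → ℝ := fun ω =>
    ((μ[A | mV U ⊔ mV L]) ω - (μ[A | mV L]) ω) + (μ[A | mV Z ⊔ mV L]) ω with hGdef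
  have hGsm : StronglyMeasurable[mV Z ⊔ mV U ⊔ mV L] G := by
    exact ((stronglyMeasurable_condExp.mono hULle).sub
      (stronglyMeasurable_condExp.mono hLle)).add (stronglyMeasurable_condExp.mono hZLle)
  have hbUL : ∀ᵐ ω ∂μ, |(μ[A|mV U ⊔ mV L]) ω| ≤ 1 := ae_bdd_one (ae_of_all _ hA1)
  have hbL : ∀ᵐ ω ∂μ, |(μ[A|mV L]) ω| ≤ 1 := ae_bdd_one (ae_of_all _ hA1)
  have hbZL : ∀ᵐ ω ∂μ, |(μ[A|mV Z ⊔ mV L]) ω| ≤ 1 := ae_bdd_one (ae_of_all _ hA1)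
  have hG_bdd : ∀ᵐ ω ∂μ, |G ω| ≤ 3 := by
    filter_upwards [hbUL, hbL, hbZL] with ω h1 h2 h3
    rw [hGdef]
    dsimp only
    rw [abs_le] at h1 h2 h3 ⊢
    constructor <;> linarith [h1.1, h1.2, h2.1, h2.2, h3.1, h3.2]
  have hG_int : Integrable G μ :=
    integrable_of_bdd ((hGsm.mono hmZUL).aestronglyMeasurable) hG_bdd
  have huniv : ∫ ω, G ω ∂μ = ∫ ω, A ω ∂μ := by
    rw [hGdef]
    have h1 : Integrable (fun ω => (μ[A|mV U ⊔ mV L]) ω - (μ[A|mV L]) ω) μ :=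
      integrable_condExp.sub integrable_condExp
    rw [integral_add h1 integrable_condExp, integral_sub integrable_condExp integrable_condExp,
      integral_condExp hmUL, integral_condExp hmL, integral_condExp hmZL]
    ring
  refine (ae_eq_condExp_of_forall_setIntegral_eq hmZUL hA_int
    (fun s _ _ => hG_int.integrableOn) ?_ hGsm.aestronglyMeasurable).symm
  intro s hs _
  refine eq_on_generated hmZUL (gen_S3 hZ hU hL) (isPiSystem_S3 Z U L) hG_int hA_int huniv
    ?_ s hs
  rintro t ⟨B₁, B₂, B₃, hB₁, hB₂, hB₃, rfl⟩
  -- notation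
  have ht_meas : MeasurableSet (Z ⁻¹' B₁ ∩ U ⁻¹' B₂ ∩ L ⁻¹' B₃) :=
    ((hZ hB₁).inter (hU hB₂)).inter (hL hB₃)
  have hgset_meas : MeasurableSet (Z ⁻¹' B₁ ∩ L ⁻¹' B₃) := (hZ hB₁).inter (hL hB₃)
  have hset : (Z ⁻¹' B₁ ∩ L ⁻¹' B₃) ∩ U ⁻¹' B₂ = Z ⁻¹' B₁ ∩ U ⁻¹' B₂ ∩ L ⁻¹' B₃ := by
    ext ω; simp [Set.mem_inter_iff]; tauto
  have hind_t : ∀ ω, ind (Z ⁻¹' B₁ ∩ U ⁻¹' B₂ ∩ L ⁻¹' B₃) ω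
      = ind (Z ⁻¹' B₁ ∩ L ⁻¹' B₃) ω * ind (U ⁻¹' B₂) ω := fun ω => by
    rw [ind_mul, hset]
  have hAg_bdd : ∀ᵐ ω ∂μ, |(A * ind (Z ⁻¹' B₁ ∩ L ⁻¹' B₃)) ω| ≤ 1 :=
    ae_of_all _ fun ω => by rw [Pi.mul_apply]; exact abs_mul_le_one (hA1 ω) (ind_le _ ω)
  have hAg_int : Integrable (A * ind (Z ⁻¹' B₁ ∩ L ⁻¹' B₃)) μ :=
    integrable_of_bdd ((hA.mul (measurable_const.indicator hgset_meas)).aestronglyMeasurable)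
      hAg_bdd
  -- bounds on relevant conditional expectations
  have hb_q : ∀ᵐ ω ∂μ, |(μ[ind (Z ⁻¹' B₁ ∩ L ⁻¹' B₃)|mV L]) ω| ≤ 1 :=
    ae_bdd_one (ae_of_all _ (ind_le _))
  have hb_p : ∀ᵐ ω ∂μ, |(μ[ind (U ⁻¹' B₂)|mV L]) ω| ≤ 1 :=
    ae_bdd_one (ae_of_all _ (ind_le _))
  have hb_r : ∀ᵐ ω ∂μ, |(μ[A * ind (Z ⁻¹' B₁ ∩ L ⁻¹' B₃)|mV L]) ω| ≤ 1 :=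
    ae_bdd_one (ae_of_all _ fun ω => by
      rw [Pi.mul_apply]; exact abs_mul_le_one (hA1 ω) (ind_le _ ω))
  -- strong measurability of indicators w.r.t. sub-σ-algebras
  have sIndU_UL : StronglyMeasurable[mV U ⊔ mV L] (ind (U ⁻¹' B₂)) :=
    stronglyMeasurable_const.indicator
      ((le_sup_left : (mV U : MeasurableSpace Ω) ≤ mV U ⊔ mV L) _ ⟨B₂, hB₂, rfl⟩)
  have sIndL3_UL : StronglyMeasurable[mV U ⊔ mV L] (ind (L ⁻¹' B₃)) :=
    stronglyMeasurable_const.indicator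
      ((le_sup_right : (mV L : MeasurableSpace Ω) ≤ mV U ⊔ mV L) _ ⟨B₃, hB₃, rfl⟩)
  have sIndL3_L : StronglyMeasurable[mV L] (ind (L ⁻¹' B₃)) :=
    stronglyMeasurable_const.indicator ⟨B₃, hB₃, rfl⟩
  have sIndG_ZL : StronglyMeasurable[mV Z ⊔ mV L] (ind (Z ⁻¹' B₁ ∩ L ⁻¹' B₃)) := by
    refine stronglyMeasurable_const.indicator (MeasurableSet.inter ?_ ?_)
    · exact (le_sup_left : (mV Z : MeasurableSpace Ω) ≤ mV Z ⊔ mV L) _ ⟨B₁, hB₁, rfl⟩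
    · exact (le_sup_right : (mV L : MeasurableSpace Ω) ≤ mV Z ⊔ mV L) _ ⟨B₃, hB₃, rfl⟩
  -- F1 : E[g | U,L] = E[g | L]
  have hLemA := condexp_ind_of_condIndep hZ hU hL hZU hB₁
  have hgsplit : ind (Z ⁻¹' B₁ ∩ L ⁻¹' B₃) = ind (L ⁻¹' B₃) * ind (Z ⁻¹' B₁) := by
    funext ω; rw [Pi.mul_apply, ind_mul, Set.inter_comm]
  have hbnorm : ∀ᵐ ω ∂μ, ‖ind (L ⁻¹' B₃) ω‖ ≤ (1:ℝ) :=
    ae_of_all _ fun ω => by simpa [Real.norm_eq_abs] using ind_le (L ⁻¹' B₃) ω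
  have hpullUL : μ[ind (L ⁻¹' B₃) * ind (Z ⁻¹' B₁) | mV U ⊔ mV L]
      =ᵐ[μ] ind (L ⁻¹' B₃) * μ[ind (Z ⁻¹' B₁) | mV U ⊔ mV L] :=
    condExp_stronglyMeasurable_mul_of_bound hmUL sIndL3_UL
      (integrable_ind (hZ hB₁)) 1 hbnorm
  have hpullL : μ[ind (L ⁻¹' B₃) * ind (Z ⁻¹' B₁) | mV L]
      =ᵐ[μ] ind (L ⁻¹' B₃) * μ[ind (Z ⁻¹' B₁) | mV L] :=
    condExp_stronglyMeasurable_mul_of_bound hmL sIndL3_L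
      (integrable_ind (hZ hB₁)) 1 hbnorm
  have F1 : μ[ind (Z ⁻¹' B₁ ∩ L ⁻¹' B₃)|mV U ⊔ mV L]
      =ᵐ[μ] μ[ind (Z ⁻¹' B₁ ∩ L ⁻¹' B₃)|mV L] := by
    rw [hgsplit]
    refine hpullUL.trans (Filter.EventuallyEq.trans ?_ hpullL.symm)
    filter_upwards [hLemA] with ω hω
    rw [Pi.mul_apply, Pi.mul_apply, hω]
  -- F2 : E[h | Z,L] = E[h | L]
  have F2 : μ[ind (U ⁻¹' B₂)|mV Z ⊔ mV L] =ᵐ[μ] μ[ind (U ⁻¹' B₂)|mV L] :=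
    condexp_ind_of_condIndep hU hZ hL hZU.symm hB₂
  -- F3 : covariance invariance
  have hcov := hinv (fun z l => B₁.indicator (fun _ => (1:ℝ)) z * B₃.indicator (fun _ => (1:ℝ)) l)
    (((measurable_const.indicator hB₁).comp measurable_fst).mul
      ((measurable_const.indicator hB₃).comp measurable_snd))
    ⟨1, fun z l => by by_cases h1 : z ∈ B₁ <;> by_cases h2 : l ∈ B₃ <;> simp [h1, h2]⟩
  have hπg : (fun ω => B₁.indicator (fun _ => (1:ℝ)) (Z ω) * B₃.indicator (fun _ => (1:ℝ)) (L ω))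
      = ind (Z ⁻¹' B₁ ∩ L ⁻¹' B₃) := by
    funext ω
    by_cases h1 : Z ω ∈ B₁ <;> by_cases h2 : L ω ∈ B₃ <;>
      simp [Set.indicator_of_mem, Set.indicator_of_notMem, h1, h2,
        Set.mem_inter_iff, Set.mem_preimage]
  rw [hπg] at hcov
  have F3 : ∀ᵐ ω ∂μ, (μ[A * ind (Z ⁻¹' B₁ ∩ L ⁻¹' B₃)|mV U ⊔ mV L]) ω
      = (μ[A * ind (Z ⁻¹' B₁ ∩ L ⁻¹' B₃)|mV L]) ω
        + ((μ[A|mV U ⊔ mV L]) ω - (μ[A|mV L]) ω)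
          * (μ[ind (Z ⁻¹' B₁ ∩ L ⁻¹' B₃)|mV L]) ω := by
    filter_upwards [hcov, F1] with ω h1 h2
    simp only [condCov, Pi.sub_apply, Pi.mul_apply] at h1
    rw [h2] at h1
    linear_combination h1

  -- strong measurability of the multiplier functions
  have sb_UL : StronglyMeasurable[mV U ⊔ mV L]
      (fun ω => ((μ[A|mV U ⊔ mV L]) ω - (μ[A|mV L]) ω) * ind (U ⁻¹' B₂) ω) := by
    exact (stronglyMeasurable_condExp.sub
      (stronglyMeasurable_condExp.mono le_sup_right)).mul sIndU_UL
  have sc_ZL : StronglyMeasurable[mV Z ⊔ mV L]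
      (fun ω => (μ[A|mV Z ⊔ mV L]) ω * ind (Z ⁻¹' B₁ ∩ L ⁻¹' B₃) ω) := by
    exact stronglyMeasurable_condExp.mul sIndG_ZL
  have sgp_ZL : StronglyMeasurable[mV Z ⊔ mV L]
      (fun ω => ind (Z ⁻¹' B₁ ∩ L ⁻¹' B₃) ω * (μ[ind (U ⁻¹' B₂)|mV L]) ω) := by
    exact sIndG_ZL.mul (stronglyMeasurable_condExp.mono le_sup_right)
  -- a.e. bounds for the multiplier functions
  have hb_bU : ∀ᵐ ω ∂μ, |((μ[A|mV U ⊔ mV L]) ω - (μ[A|mV L]) ω) * ind (U ⁻¹' B₂) ω| ≤ 2 := by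
    filter_upwards [hbUL, hbL] with ω h1 h2
    refine abs_mul_le ?_ (ind_le _ ω)
    rw [abs_le] at h1 h2 ⊢; constructor <;> linarith [h1.1, h1.2, h2.1, h2.2]
  have hb_cg : ∀ᵐ ω ∂μ, |(μ[A|mV Z ⊔ mV L]) ω * ind (Z ⁻¹' B₁ ∩ L ⁻¹' B₃) ω| ≤ 1 := by
    filter_upwards [hbZL] with ω h1
    exact abs_mul_le_one h1 (ind_le _ ω)
  have hb_gp : ∀ᵐ ω ∂μ, |ind (Z ⁻¹' B₁ ∩ L ⁻¹' B₃) ω * (μ[ind (U ⁻¹' B₂)|mV L]) ω| ≤ 1 := by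
    filter_upwards [hb_p] with ω h1
    exact abs_mul_le_one (ind_le _ ω) h1
  -- integrability of summands
  have i1 : Integrable (fun ω => (μ[A * ind (Z ⁻¹' B₁ ∩ L ⁻¹' B₃)|mV L]) ω * ind (U ⁻¹' B₂) ω) μ := by
    refine integrable_of_bdd (C := 1)
      ((stronglyMeasurable_condExp.mono hmL).aestronglyMeasurable.mul
        (measurable_const.indicator (hU hB₂)).aestronglyMeasurable) ?_
    filter_upwards [hb_r] with ω h1
    exact abs_mul_le_one h1 (ind_le _ ω)
  have i2 : Integrable (fun ω => ((μ[A|mV U ⊔ mV L]) ω - (μ[A|mV L]) ω) * ind (U ⁻¹' B₂) ω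
      * (μ[ind (Z ⁻¹' B₁ ∩ L ⁻¹' B₃)|mV L]) ω) μ := by
    refine integrable_of_bdd (C := 2)
      ((((stronglyMeasurable_condExp.mono hmUL).aestronglyMeasurable.sub
        (stronglyMeasurable_condExp.mono hmL).aestronglyMeasurable).mul
        (measurable_const.indicator (hU hB₂)).aestronglyMeasurable).mul
        (stronglyMeasurable_condExp.mono hmL).aestronglyMeasurable) ?_
    filter_upwards [hb_bU, hb_q] with ω h1 h2
    exact abs_mul_le h1 h2
  have i3 : Integrable (fun ω => ((μ[A|mV U ⊔ mV L]) ω - (μ[A|mV L]) ω) * ind (U ⁻¹' B₂) ω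
      * ind (Z ⁻¹' B₁ ∩ L ⁻¹' B₃) ω) μ := by
    refine integrable_of_bdd (C := 2)
      ((((stronglyMeasurable_condExp.mono hmUL).aestronglyMeasurable.sub
        (stronglyMeasurable_condExp.mono hmL).aestronglyMeasurable).mul
        (measurable_const.indicator (hU hB₂)).aestronglyMeasurable).mul
        (measurable_const.indicator hgset_meas).aestronglyMeasurable) ?_
    filter_upwards [hb_bU] with ω h1
    exact abs_mul_le h1 (ind_le _ ω)
  have i4 : Integrable (fun ω => (μ[A|mV Z ⊔ mV L]) ω * ind (Z ⁻¹' B₁ ∩ L ⁻¹' B₃) ω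
      * ind (U ⁻¹' B₂) ω) μ := by
    refine integrable_of_bdd (C := 1)
      (((stronglyMeasurable_condExp.mono hmZL).aestronglyMeasurable.mul
        (measurable_const.indicator hgset_meas).aestronglyMeasurable).mul
        (measurable_const.indicator (hU hB₂)).aestronglyMeasurable) ?_
    filter_upwards [hb_cg] with ω h1
    exact abs_mul_le h1 (ind_le _ ω)
  -- the A-side computation
  have hsplitA : ∫ ω in Z ⁻¹' B₁ ∩ U ⁻¹' B₂ ∩ L ⁻¹' B₃, A ω ∂μ
      = ∫ ω, (μ[A * ind (Z ⁻¹' B₁ ∩ L ⁻¹' B₃)|mV L]) ω * (μ[ind (U ⁻¹' B₂)|mV L]) ω ∂μ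
        + ∫ ω, ((μ[A|mV U ⊔ mV L]) ω - (μ[A|mV L]) ω) * ind (U ⁻¹' B₂) ω
            * (μ[ind (Z ⁻¹' B₁ ∩ L ⁻¹' B₃)|mV L]) ω ∂μ := by
    calc ∫ ω in Z ⁻¹' B₁ ∩ U ⁻¹' B₂ ∩ L ⁻¹' B₃, A ω ∂μ
        = ∫ ω, A ω * ind (Z ⁻¹' B₁ ∩ U ⁻¹' B₂ ∩ L ⁻¹' B₃) ω ∂μ :=
          setIntegral_eq_integral_mul_ind _ ht_meas
      _ = ∫ ω, ind (U ⁻¹' B₂) ω * (A * ind (Z ⁻¹' B₁ ∩ L ⁻¹' B₃)) ω ∂μ := by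
          refine integral_congr_ae (Filter.Eventually.of_forall fun ω => ?_)
          dsimp only
          rw [hind_t ω, Pi.mul_apply]; ring
      _ = ∫ ω, ind (U ⁻¹' B₂) ω * (μ[A * ind (Z ⁻¹' B₁ ∩ L ⁻¹' B₃)|mV U ⊔ mV L]) ω ∂μ :=
          integral_mul_condexp hmUL sIndU_UL (C := 1) (ae_of_all _ (ind_le _)) hAg_int
      _ = ∫ ω, ((μ[A * ind (Z ⁻¹' B₁ ∩ L ⁻¹' B₃)|mV L]) ω * ind (U ⁻¹' B₂) ω
            + ((μ[A|mV U ⊔ mV L]) ω - (μ[A|mV L]) ω) * ind (U ⁻¹' B₂) ω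
              * (μ[ind (Z ⁻¹' B₁ ∩ L ⁻¹' B₃)|mV L]) ω) ∂μ := by
          refine integral_congr_ae ?_
          filter_upwards [F3] with ω h
          rw [h]; ring
      _ = ∫ ω, (μ[A * ind (Z ⁻¹' B₁ ∩ L ⁻¹' B₃)|mV L]) ω * ind (U ⁻¹' B₂) ω ∂μ
            + ∫ ω, ((μ[A|mV U ⊔ mV L]) ω - (μ[A|mV L]) ω) * ind (U ⁻¹' B₂) ω
              * (μ[ind (Z ⁻¹' B₁ ∩ L ⁻¹' B₃)|mV L]) ω ∂μ := integral_add i1 i2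
      _ = _ := by
          rw [integral_mul_condexp hmL stronglyMeasurable_condExp (C := 1) hb_r
            (integrable_ind (hU hB₂))]
  -- the G-side computation
  have hsplitG : ∫ ω in Z ⁻¹' B₁ ∩ U ⁻¹' B₂ ∩ L ⁻¹' B₃, G ω ∂μ
      = ∫ ω, ((μ[A|mV U ⊔ mV L]) ω - (μ[A|mV L]) ω) * ind (U ⁻¹' B₂) ω
          * ind (Z ⁻¹' B₁ ∩ L ⁻¹' B₃) ω ∂μ
        + ∫ ω, (μ[A|mV Z ⊔ mV L]) ω * ind (Z ⁻¹' B₁ ∩ L ⁻¹' B₃) ω * ind (U ⁻¹' B₂) ω ∂μ := by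
    calc ∫ ω in Z ⁻¹' B₁ ∩ U ⁻¹' B₂ ∩ L ⁻¹' B₃, G ω ∂μ
        = ∫ ω, G ω * ind (Z ⁻¹' B₁ ∩ U ⁻¹' B₂ ∩ L ⁻¹' B₃) ω ∂μ :=
          setIntegral_eq_integral_mul_ind _ ht_meas
      _ = ∫ ω, (((μ[A|mV U ⊔ mV L]) ω - (μ[A|mV L]) ω) * ind (U ⁻¹' B₂) ω
            * ind (Z ⁻¹' B₁ ∩ L ⁻¹' B₃) ω
            + (μ[A|mV Z ⊔ mV L]) ω * ind (Z ⁻¹' B₁ ∩ L ⁻¹' B₃) ω * ind (U ⁻¹' B₂) ω) ∂μ := by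
          refine integral_congr_ae (Filter.Eventually.of_forall fun ω => ?_)
          rw [hGdef]
          dsimp only
          rw [hind_t ω]; ring
      _ = _ := integral_add i3 i4
  -- transform the two G-side terms
  have hterm3 : ∫ ω, ((μ[A|mV U ⊔ mV L]) ω - (μ[A|mV L]) ω) * ind (U ⁻¹' B₂) ω
        * ind (Z ⁻¹' B₁ ∩ L ⁻¹' B₃) ω ∂μ
      = ∫ ω, ((μ[A|mV U ⊔ mV L]) ω - (μ[A|mV L]) ω) * ind (U ⁻¹' B₂) ω
        * (μ[ind (Z ⁻¹' B₁ ∩ L ⁻¹' B₃)|mV L]) ω ∂μ := by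
    calc ∫ ω, ((μ[A|mV U ⊔ mV L]) ω - (μ[A|mV L]) ω) * ind (U ⁻¹' B₂) ω
          * ind (Z ⁻¹' B₁ ∩ L ⁻¹' B₃) ω ∂μ
        = ∫ ω, ((μ[A|mV U ⊔ mV L]) ω - (μ[A|mV L]) ω) * ind (U ⁻¹' B₂) ω
          * (μ[ind (Z ⁻¹' B₁ ∩ L ⁻¹' B₃)|mV U ⊔ mV L]) ω ∂μ :=
          integral_mul_condexp hmUL sb_UL (C := 2) hb_bU (integrable_ind hgset_meas)
      _ = _ := by
          refine integral_congr_ae ?_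
          filter_upwards [F1] with ω h
          rw [h]
  have hterm4 : ∫ ω, (μ[A|mV Z ⊔ mV L]) ω * ind (Z ⁻¹' B₁ ∩ L ⁻¹' B₃) ω
        * ind (U ⁻¹' B₂) ω ∂μ
      = ∫ ω, (μ[A * ind (Z ⁻¹' B₁ ∩ L ⁻¹' B₃)|mV L]) ω * (μ[ind (U ⁻¹' B₂)|mV L]) ω ∂μ := by
    calc ∫ ω, (μ[A|mV Z ⊔ mV L]) ω * ind (Z ⁻¹' B₁ ∩ L ⁻¹' B₃) ω * ind (U ⁻¹' B₂) ω ∂μ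
        = ∫ ω, (μ[A|mV Z ⊔ mV L]) ω * ind (Z ⁻¹' B₁ ∩ L ⁻¹' B₃) ω
            * (μ[ind (U ⁻¹' B₂)|mV Z ⊔ mV L]) ω ∂μ :=
          integral_mul_condexp hmZL sc_ZL (C := 1) hb_cg (integrable_ind (hU hB₂))
      _ = ∫ ω, (μ[A|mV Z ⊔ mV L]) ω * ind (Z ⁻¹' B₁ ∩ L ⁻¹' B₃) ω
            * (μ[ind (U ⁻¹' B₂)|mV L]) ω ∂μ := by
          refine integral_congr_ae ?_
          filter_upwards [F2] with ω h
          rw [h]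
      _ = ∫ ω, (ind (Z ⁻¹' B₁ ∩ L ⁻¹' B₃) ω * (μ[ind (U ⁻¹' B₂)|mV L]) ω)
            * (μ[A|mV Z ⊔ mV L]) ω ∂μ :=
          integral_congr_ae (Filter.Eventually.of_forall fun ω => by dsimp only; ring)
      _ = ∫ ω, (ind (Z ⁻¹' B₁ ∩ L ⁻¹' B₃) ω * (μ[ind (U ⁻¹' B₂)|mV L]) ω) * A ω ∂μ :=
          (integral_mul_condexp hmZL sgp_ZL (C := 1) hb_gp hA_int).symm
      _ = ∫ ω, (μ[ind (U ⁻¹' B₂)|mV L]) ω * (A * ind (Z ⁻¹' B₁ ∩ L ⁻¹' B₃)) ω ∂μ :=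
          integral_congr_ae (Filter.Eventually.of_forall fun ω => by
            dsimp only [Pi.mul_apply]; ring)
      _ = ∫ ω, (μ[ind (U ⁻¹' B₂)|mV L]) ω * (μ[A * ind (Z ⁻¹' B₁ ∩ L ⁻¹' B₃)|mV L]) ω ∂μ :=
          integral_mul_condexp hmL stronglyMeasurable_condExp (C := 1) hb_p hAg_int
      _ = _ :=
          integral_congr_ae (Filter.Eventually.of_forall fun ω => by dsimp only; ring)
  rw [hsplitG, hsplitA, hterm3, hterm4]
  exact add_comm _ _
end

section
/- Let A be a {0,1}-valued random variable and Z, L random variables. A bounded measurable function π(Z,L) satisfying |Cov(A, π(Z,L) | L)| ≥ ε₀ > 0 uniformly exists if and only if Var(P(A=1|Z,L) | L) ≥ ε₀' > 0 uniformly for some ε₀' > 0. Moreover, whenever such a π exists, π°(Z,L) := P(A=1|Z,L) is itself such a function. -/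
open MeasureTheory ProbabilityTheory

/-- A regular weighting function (RWF) for a binary treatment `A`: an (essentially) bounded
weight `W` whose conditional covariance with `A` given `L` is uniformly bounded away from `0`. -/
def IsRWF {Ω : Type*} [mΩ : MeasurableSpace Ω] (μ : Measure Ω) (mL : MeasurableSpace Ω)
    (A W : Ω → ℝ) : Prop :=
  (∃ C : ℝ, ∀ᵐ ω ∂μ, |W ω| ≤ C) ∧
  ∃ ε₀ : ℝ, 0 < ε₀ ∧ ∀ᵐ ω ∂μ, ε₀ ≤ |@condCov Ω mΩ μ mL A W ω|


section Aux

variable {Ω : Type*} [mΩ : MeasurableSpace Ω] {μ : Measure Ω} [IsProbabilityMeasure μ]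

lemma intOfBdd {g : Ω → ℝ} (hg : AEStronglyMeasurable g μ) (C : ℝ)
    (h : ∀ᵐ ω ∂μ, |g ω| ≤ C) : Integrable g μ :=
  (integrable_const C).mono' hg (h.mono fun ω hω => by simpa [Real.norm_eq_abs] using hω)

lemma condexpBdd {m : MeasurableSpace Ω} (hm : m ≤ mΩ) {g : Ω → ℝ} (hg : Integrable g μ)
    {C : ℝ} (h : ∀ᵐ ω ∂μ, |g ω| ≤ C) : ∀ᵐ ω ∂μ, |(μ[g|m]) ω| ≤ C := by
  have h1 : μ[g|m] ≤ᵐ[μ] μ[(fun _ => C)|m] :=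
    condExp_mono hg (integrable_const C) (h.mono fun ω hω => (abs_le.mp hω).2)
  have h2 : μ[(fun _ => -C)|m] ≤ᵐ[μ] μ[g|m] :=
    condExp_mono (integrable_const (-C)) hg (h.mono fun ω hω => (abs_le.mp hω).1)
  rw [condExp_const hm] at h1
  rw [condExp_const hm] at h2
  filter_upwards [h1, h2] with ω ha hb
  exact abs_le.mpr ⟨hb, ha⟩

lemma absCondexp {m : MeasurableSpace Ω} {g : Ω → ℝ} (hg : Integrable g μ) :
    ∀ᵐ ω ∂μ, |(μ[g|m]) ω| ≤ (μ[(fun ω => |g ω|)|m]) ω := by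
  have h1 : μ[g|m] ≤ᵐ[μ] μ[(fun ω => |g ω|)|m] :=
    condExp_mono hg hg.abs (ae_of_all _ fun ω => le_abs_self _)
  have h2 : μ[(fun ω => -|g ω|)|m] ≤ᵐ[μ] μ[g|m] :=
    condExp_mono hg.abs.neg hg (ae_of_all _ fun ω => neg_abs_le _)
  have h3 : μ[(fun ω => -|g ω|)|m] =ᵐ[μ] fun ω => -(μ[(fun ω => |g ω|)|m]) ω := by
    simpa [Pi.neg_def] using condExp_neg (fun ω => |g ω|) (m := m) (μ := μ)
  filter_upwards [h1, h2, h3] with ω ha hb hc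
  rw [hc] at hb
  exact abs_le.mpr ⟨by linarith, ha⟩

end Aux

/-- Doob–Dynkin for `[0,1]`-valued functions. -/
lemma doobDynkin {Ω β : Type*} [MeasurableSpace β] {g : Ω → β} {f : Ω → ℝ}
    (hf : Measurable[MeasurableSpace.comap g inferInstance] f)
    (h01 : ∀ ω, 0 ≤ f ω ∧ f ω ≤ 1) :
    ∃ h : β → ℝ, Measurable h ∧ ∀ ω, h (g ω) = f ω := by
  classical
  have hS : ∀ q : ℚ, ∃ t : Set β, MeasurableSet t ∧ g ⁻¹' t = f ⁻¹' Set.Iio (q : ℝ) := fun q =>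
    hf (measurableSet_Iio (a := (q : ℝ)))
  choose t ht hgt using hS
  set u : ℚ → β → ℝ := fun q b => if -1 ≤ q ∧ b ∈ t q then (q : ℝ) else 2 with hu
  have hum : ∀ q, Measurable (u q) := by
    intro q
    have hset : MeasurableSet {b | -1 ≤ q ∧ b ∈ t q} := by
      by_cases hq : -1 ≤ q
      · simpa [hq] using ht q
      · simp [hq]
    exact Measurable.ite hset measurable_const measurable_const
  refine ⟨fun b => ⨅ q : ℚ, u q b, Measurable.iInf hum, fun ω => ?_⟩
  have hval : ∀ q : ℚ, u q (g ω) = if -1 ≤ q ∧ f ω < (q : ℝ) then (q : ℝ) else 2 := by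
    intro q
    have : g ω ∈ t q ↔ f ω < (q : ℝ) := by
      constructor
      · intro h; have := (Set.ext_iff.mp (hgt q) ω).mp h; simpa using this
      · intro h; exact (Set.ext_iff.mp (hgt q) ω).mpr (by simpa using h)
    simp only [hu]
    by_cases h1 : -1 ≤ q <;> by_cases h2 : f ω < (q : ℝ) <;>
      simp [h1, h2, this]
  have hbdd : BddBelow (Set.range fun q : ℚ => u q (g ω)) := by
    refine ⟨-1, ?_⟩
    rintro x ⟨q, rfl⟩
    show -1 ≤ u q (g ω)
    rw [hval q]
    split_ifs with h
    · exact_mod_cast h.1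
    · norm_num
  have hle : f ω ≤ ⨅ q : ℚ, u q (g ω) := by
    refine le_ciInf fun q => ?_
    rw [hval q]
    split_ifs with h
    · exact le_of_lt h.2
    · linarith [(h01 ω).2]
  have hge : (⨅ q : ℚ, u q (g ω)) ≤ f ω := by
    refine le_of_forall_pos_le_add fun ε hε => ?_
    obtain ⟨q, hq1, hq2⟩ := exists_rat_btwn (lt_add_of_pos_right (f ω) hε)
    have hq0 : -1 ≤ q := by
      have h' : (-1:ℝ) ≤ (q:ℝ) := by
        have : (0:ℝ) < (q:ℝ) := lt_of_le_of_lt (h01 ω).1 hq1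
        linarith
      exact_mod_cast h'
    calc (⨅ q : ℚ, u q (g ω)) ≤ u q (g ω) := ciInf_le hbdd q
      _ = (q : ℝ) := by rw [hval q]; simp [hq0, hq1]
      _ ≤ f ω + ε := le_of_lt hq2
  linarith [le_antisymm hle hge]

/-- An RWF of the form `π(Z,L)` for `A` exists iff
`Var(P(A=1|Z,L) | L)` is uniformly bounded below by a positive constant; moreover, whenever
such a `π` exists, `π°(Z,L) := P(A=1|Z,L)` is itself an RWF. -/
theorem stmt3 {Ω : Type*} [mΩ : MeasurableSpace Ω]
    (μ : Measure Ω) [IsProbabilityMeasure μ]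
    (A Z L : Ω → ℝ)
    (hA : Measurable A) (hZ : Measurable Z) (hL : Measurable L)
    (hA01 : ∀ ω, A ω = 0 ∨ A ω = 1) :
    ((∃ π : ℝ → ℝ → ℝ, (Measurable fun p : ℝ × ℝ => π p.1 p.2) ∧
        IsRWF μ (mV L) A (fun ω => π (Z ω) (L ω)))
      ↔ (∃ ε₀' : ℝ, 0 < ε₀' ∧ ∀ᵐ ω ∂μ,
          ε₀' ≤ condCov μ (mV L) (μ[A | mV Z ⊔ mV L]) (μ[A | mV Z ⊔ mV L]) ω))
    ∧ ((∃ π : ℝ → ℝ → ℝ, (Measurable fun p : ℝ × ℝ => π p.1 p.2) ∧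
        IsRWF μ (mV L) A (fun ω => π (Z ω) (L ω)))
      → IsRWF μ (mV L) A (μ[A | mV Z ⊔ mV L])) := by
  classical
  have hm : (mV L) ≤ mΩ := hL.comap_le
  have hzl : (mV Z ⊔ mV L) ≤ mΩ := sup_le hZ.comap_le hL.comap_le
  have hmzl : (mV L) ≤ (mV Z ⊔ mV L) := le_sup_right
  -- the pair map
  set P : Ω → ℝ × ℝ := fun ω => (Z ω, L ω) with hP_def
  have hcomap : (mV Z ⊔ mV L) = MeasurableSpace.comap P inferInstance := by
    apply le_antisymm
    · refine sup_le ?_ ?_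
      · have h1 : MeasurableSpace.comap Z inferInstance
            = (MeasurableSpace.comap Prod.fst inferInstance).comap P := by
          rw [MeasurableSpace.comap_comp]; rfl
        calc mV Z = (MeasurableSpace.comap Prod.fst inferInstance).comap P := h1
          _ ≤ MeasurableSpace.comap P inferInstance :=
            MeasurableSpace.comap_mono measurable_fst.comap_le
      · have h1 : MeasurableSpace.comap L inferInstance
            = (MeasurableSpace.comap Prod.snd inferInstance).comap P := by
          rw [MeasurableSpace.comap_comp]; rfl
        calc mV L = (MeasurableSpace.comap Prod.snd inferInstance).comap P := h1
          _ ≤ MeasurableSpace.comap P inferInstance :=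
            MeasurableSpace.comap_mono measurable_snd.comap_le
    · refine Measurable.comap_le ?_
      exact Measurable.prodMk
        ((comap_measurable Z).mono le_sup_left le_rfl)
        ((comap_measurable L).mono le_sup_right le_rfl)
  set f : Ω → ℝ := μ[A|(mV Z ⊔ mV L)] with hf_def
  have hA1 : ∀ ω, |A ω| ≤ 1 := fun ω => by rcases hA01 ω with h | h <;> simp [h]
  have hAint : Integrable A μ := intOfBdd hA.aestronglyMeasurable 1 (ae_of_all _ hA1)
  have hfSM : StronglyMeasurable[(mV Z ⊔ mV L)] f := stronglyMeasurable_condExp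
  have hfSM' : StronglyMeasurable f := hfSM.mono hzl
  have hfint : Integrable f μ := integrable_condExp
  have hfbd : ∀ᵐ ω ∂μ, |f ω| ≤ 1 := condexpBdd hzl hAint (ae_of_all _ hA1)
  set gg : Ω → ℝ := μ[f|(mV L)] with hg_def
  have hggSM : StronglyMeasurable[(mV L)] gg := stronglyMeasurable_condExp
  have hggSM' : StronglyMeasurable gg := hggSM.mono hm
  have hggint : Integrable gg μ := integrable_condExp
  have hggbd : ∀ᵐ ω ∂μ, |gg ω| ≤ 1 := condexpBdd hm hfint hfbd
  set ft : Ω → ℝ := fun ω => f ω - gg ω with hft_def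
  have hftm : AEStronglyMeasurable ft μ := (hfSM'.sub hggSM').aestronglyMeasurable
  have hftbd : ∀ᵐ ω ∂μ, |ft ω| ≤ 2 := by
    filter_upwards [hfbd, hggbd] with ω h1 h2
    calc |f ω - gg ω| ≤ |f ω| + |gg ω| := abs_sub _ _
      _ ≤ 2 := by linarith
  have hftint : Integrable ft μ := intOfBdd hftm 2 hftbd
  -- μ[gg | (mV L)] = gg
  have hggfix : μ[gg|(mV L)] = gg := condExp_of_stronglyMeasurable hm hggSM hggint
  -- μ[ft | (mV L)] =ᵐ 0
  have hft0 : μ[ft|(mV L)] =ᵐ[μ] fun _ => (0:ℝ) := by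
    have h1 : μ[ft|(mV L)] =ᵐ[μ] μ[f|(mV L)] - μ[gg|(mV L)] := condExp_sub hfint hggint (mV L)
    rw [hggfix] at h1
    filter_upwards [h1] with ω hω
    simp only [Pi.sub_apply] at hω
    simp [hω, hg_def]
  -- key tower identity
  have key : ∀ W : Ω → ℝ, StronglyMeasurable[(mV Z ⊔ mV L)] W → ∀ C : ℝ, (∀ᵐ ω ∂μ, |W ω| ≤ C) →
      condCov μ (mV L) A W =ᵐ[μ] μ[(fun ω => W ω * ft ω)|(mV L)] := by
    intro W hW C hWbd
    have hWSM : StronglyMeasurable W := hW.mono hzl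
    have hWint : Integrable W μ := intOfBdd hWSM.aestronglyMeasurable C hWbd
    have hAW : Integrable (fun ω => A ω * W ω) μ := by
      refine intOfBdd (hA.aestronglyMeasurable.mul hWSM.aestronglyMeasurable) C ?_
      filter_upwards [hWbd] with ω h1
      calc |A ω * W ω| = |A ω| * |W ω| := abs_mul _ _
        _ ≤ 1 * C := mul_le_mul (hA1 ω) h1 (abs_nonneg _) zero_le_one
        _ = C := one_mul C
    have hWA : Integrable (W * A) μ := by
      have : W * A = fun ω => A ω * W ω := by funext ω; simp [mul_comm]
      rw [this]; exact hAW
    have hWf : Integrable (fun ω => W ω * f ω) μ := by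
      refine intOfBdd (hWSM.aestronglyMeasurable.mul hfSM'.aestronglyMeasurable) C ?_
      filter_upwards [hWbd, hfbd] with ω h1 h2
      calc |W ω * f ω| = |W ω| * |f ω| := abs_mul _ _
        _ ≤ C * 1 := mul_le_mul h1 h2 (abs_nonneg _) ((abs_nonneg _).trans h1)
        _ = C := mul_one C
    have hggW : Integrable (gg * W) μ := by
      refine intOfBdd (hggSM'.aestronglyMeasurable.mul hWSM.aestronglyMeasurable) C ?_
      filter_upwards [hWbd, hggbd] with ω h1 h2
      calc |gg ω * W ω| = |gg ω| * |W ω| := abs_mul _ _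
        _ ≤ 1 * C := mul_le_mul h2 h1 (abs_nonneg _) zero_le_one
        _ = C := one_mul C
    -- step 1: tower + pull out
    have e1 : μ[A * W|(mV L)] =ᵐ[μ] μ[(fun ω => W ω * f ω)|(mV L)] := by
      have t1 : μ[A * W|(mV L)] =ᵐ[μ] μ[μ[A * W|(mV Z ⊔ mV L)]|(mV L)] := (condExp_condExp_of_le hmzl hzl).symm
      have t2 : μ[A * W|(mV Z ⊔ mV L)] =ᵐ[μ] W * μ[A|(mV Z ⊔ mV L)] := by
        have hAWc : A * W = W * A := mul_comm A W
        rw [hAWc]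
        exact condExp_mul_of_stronglyMeasurable_left hW hWA hAint
      have t3 : μ[μ[A * W|(mV Z ⊔ mV L)]|(mV L)] =ᵐ[μ] μ[(fun ω => W ω * f ω)|(mV L)] := by
        refine condExp_congr_ae (t2.trans ?_)
        exact Filter.EventuallyEq.of_eq (by funext ω; simp [hf_def])
      exact t1.trans t3
    -- step 2
    have e2 : μ[A|(mV L)] =ᵐ[μ] gg := (condExp_condExp_of_le hmzl hzl).symm
    -- step 3: pull out gg
    have e3 : μ[gg * W|(mV L)] =ᵐ[μ] gg * μ[W|(mV L)] :=
      condExp_mul_of_stronglyMeasurable_left hggSM hggW hWint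
    -- step 4
    have e4 : μ[(fun ω => W ω * ft ω)|(mV L)]
        =ᵐ[μ] μ[(fun ω => W ω * f ω)|(mV L)] - μ[gg * W|(mV L)] := by
      have hfun : (fun ω => W ω * ft ω) = (fun ω => W ω * f ω) - gg * W := by
        funext ω; simp only [Pi.sub_apply, Pi.mul_apply, hft_def]; ring
      rw [hfun]
      exact condExp_sub hWf hggW (mV L)
    filter_upwards [e1, e2, e3, e4] with ω h1 h2 h3 h4
    simp only [condCov, Pi.sub_apply, Pi.mul_apply] at h1 h2 h3 h4 ⊢
    rw [h4, h1, h2, h3]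
  -- condVar identity : condCov f f =ᵐ μ[ft*ft|(mV L)]
  have hff : Integrable (f * f) μ := by
    refine intOfBdd (hfSM'.aestronglyMeasurable.mul hfSM'.aestronglyMeasurable) 1 ?_
    filter_upwards [hfbd] with ω h1
    calc |f ω * f ω| = |f ω| * |f ω| := abs_mul _ _
      _ ≤ 1 * 1 := mul_le_mul h1 h1 (abs_nonneg _) zero_le_one
      _ = 1 := one_mul 1
  have hq : Integrable (fun ω => f ω + f ω - gg ω) μ := by
    refine intOfBdd ((hfSM'.add hfSM').sub hggSM').aestronglyMeasurable 3 ?_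
    filter_upwards [hfbd, hggbd] with ω h1 h2
    have := abs_sub_abs_le_abs_sub (f ω + f ω) (gg ω)
    calc |f ω + f ω - gg ω| ≤ |f ω + f ω| + |gg ω| := abs_sub _ _
      _ ≤ (|f ω| + |f ω|) + |gg ω| := by gcongr; exact abs_add_le _ _
      _ ≤ 3 := by linarith
  have hggq : Integrable (gg * fun ω => f ω + f ω - gg ω) μ := by
    refine intOfBdd (hggSM'.aestronglyMeasurable.mul
      ((hfSM'.add hfSM').sub hggSM').aestronglyMeasurable) 3 ?_
    filter_upwards [hfbd, hggbd] with ω h1 h2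
    calc |gg ω * (f ω + f ω - gg ω)| = |gg ω| * |f ω + f ω - gg ω| := abs_mul _ _
      _ ≤ 1 * 3 := by
          refine mul_le_mul h2 ?_ (abs_nonneg _) zero_le_one
          calc |f ω + f ω - gg ω| ≤ |f ω + f ω| + |gg ω| := abs_sub _ _
            _ ≤ (|f ω| + |f ω|) + |gg ω| := by gcongr; exact abs_add_le _ _
            _ ≤ 3 := by linarith
      _ = 3 := one_mul 3
  have hftft : Integrable (fun ω => ft ω * ft ω) μ := by
    refine intOfBdd (hftm.mul hftm) 4 ?_
    filter_upwards [hftbd] with ω h1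
    calc |ft ω * ft ω| = |ft ω| * |ft ω| := abs_mul _ _
      _ ≤ 2 * 2 := mul_le_mul h1 h1 (abs_nonneg _) (by norm_num)
      _ = 4 := by norm_num
  have hvar : condCov μ (mV L) f f =ᵐ[μ] μ[(fun ω => ft ω * ft ω)|(mV L)] := by
    have hqcond : μ[(fun ω => f ω + f ω - gg ω)|(mV L)] =ᵐ[μ] gg := by
      have h1 : μ[(fun ω => f ω + f ω - gg ω)|(mV L)]
          =ᵐ[μ] μ[(fun ω => f ω + f ω)|(mV L)] - μ[gg|(mV L)] := by
        have : (fun ω => f ω + f ω - gg ω) = (fun ω => f ω + f ω) - gg := rfl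
        rw [this]
        exact condExp_sub (hfint.add hfint) hggint (mV L)
      have h2 : μ[(fun ω => f ω + f ω)|(mV L)] =ᵐ[μ] μ[f|(mV L)] + μ[f|(mV L)] := by
        have : (fun ω => f ω + f ω) = f + f := rfl
        rw [this]
        exact condExp_add hfint hfint (mV L)
      rw [hggfix] at h1
      filter_upwards [h1, h2] with ω e1 e2
      simp only [Pi.sub_apply, Pi.add_apply] at e1 e2 ⊢
      rw [e1, e2]
      ring
    have hsplit : (fun ω => ft ω * ft ω)
        = f * f - gg * fun ω => f ω + f ω - gg ω := by
      funext ω; simp only [Pi.sub_apply, Pi.mul_apply, hft_def]; ring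
    have h3 : μ[(fun ω => ft ω * ft ω)|(mV L)]
        =ᵐ[μ] μ[f * f|(mV L)] - μ[gg * fun ω => f ω + f ω - gg ω|(mV L)] := by
      rw [hsplit]; exact condExp_sub hff hggq (mV L)
    have h4 : μ[gg * fun ω => f ω + f ω - gg ω|(mV L)]
        =ᵐ[μ] gg * μ[(fun ω => f ω + f ω - gg ω)|(mV L)] :=
      condExp_mul_of_stronglyMeasurable_left hggSM hggq hq
    filter_upwards [h3, h4, hqcond] with ω e3 e4 e5
    simp only [condCov, Pi.sub_apply, Pi.mul_apply] at e3 e4 e5 ⊢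
    rw [e3, e4, e5]
  -- condCov A f =ᵐ condCov f f
  have hAf : condCov μ (mV L) A f =ᵐ[μ] condCov μ (mV L) f f := by
    have h1 : condCov μ (mV L) A f =ᵐ[μ] μ[(fun ω => f ω * ft ω)|(mV L)] := key f hfSM 1 hfbd
    have hfft : Integrable (fun ω => f ω * ft ω) μ := by
      refine intOfBdd (hfSM'.aestronglyMeasurable.mul hftm) 2 ?_
      filter_upwards [hfbd, hftbd] with ω e1 e2
      calc |f ω * ft ω| = |f ω| * |ft ω| := abs_mul _ _
        _ ≤ 1 * 2 := mul_le_mul e1 e2 (abs_nonneg _) zero_le_one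
        _ = 2 := one_mul 2
    have hggft : Integrable (gg * ft) μ := by
      refine intOfBdd (hggSM'.aestronglyMeasurable.mul hftm) 2 ?_
      filter_upwards [hggbd, hftbd] with ω e1 e2
      calc |gg ω * ft ω| = |gg ω| * |ft ω| := abs_mul _ _
        _ ≤ 1 * 2 := mul_le_mul e1 e2 (abs_nonneg _) zero_le_one
        _ = 2 := one_mul 2
    have h2 : μ[(fun ω => f ω * ft ω)|(mV L)]
        =ᵐ[μ] μ[(fun ω => ft ω * ft ω)|(mV L)] + μ[gg * ft|(mV L)] := by
      have : (fun ω => f ω * ft ω) = (fun ω => ft ω * ft ω) + gg * ft := by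
        funext ω; simp only [Pi.add_apply, Pi.mul_apply, hft_def]; ring
      rw [this]
      exact condExp_add hftft hggft (mV L)
    have h3 : μ[gg * ft|(mV L)] =ᵐ[μ] gg * μ[ft|(mV L)] :=
      condExp_mul_of_stronglyMeasurable_left hggSM hggft hftint
    filter_upwards [h1, h2, h3, hft0, hvar] with ω e1 e2 e3 e4 e5
    rw [e1, e2]
    simp only [Pi.add_apply, Pi.mul_apply] at e3 e4 ⊢
    rw [e3, e4]
    simp [e5]
  -- forward direction
  have fwd : (∃ π : ℝ → ℝ → ℝ, (Measurable fun p : ℝ × ℝ => π p.1 p.2) ∧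
      IsRWF μ (mV L) A (fun ω => π (Z ω) (L ω))) →
      ∃ ε₀' : ℝ, 0 < ε₀' ∧ ∀ᵐ ω ∂μ, ε₀' ≤ condCov μ (mV L) f f ω := by
    rintro ⟨π, hπm, ⟨⟨C, hC⟩, ε₀, hε₀, hcov⟩⟩
    set W : Ω → ℝ := fun ω => π (Z ω) (L ω) with hW_def
    have hPzl : Measurable[(mV Z ⊔ mV L)] P := by
      rw [hcomap]; exact comap_measurable P
    have hWSMzl : StronglyMeasurable[(mV Z ⊔ mV L)] W := by
      have : Measurable[(mV Z ⊔ mV L)] W := hπm.comp hPzl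
      exact this.stronglyMeasurable
    set C' : ℝ := max C 1 with hC'_def
    have hC'pos : (0:ℝ) < C' := lt_of_lt_of_le one_pos (le_max_right C 1)
    have hC' : ∀ᵐ ω ∂μ, |W ω| ≤ C' := hC.mono fun ω h => h.trans (le_max_left C 1)
    have hkey := key W hWSMzl C' hC'
    have hWft : Integrable (fun ω => W ω * ft ω) μ := by
      refine intOfBdd ((hWSMzl.mono hzl).aestronglyMeasurable.mul hftm) (C' * 2) ?_
      filter_upwards [hC', hftbd] with ω e1 e2
      calc |W ω * ft ω| = |W ω| * |ft ω| := abs_mul _ _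
        _ ≤ C' * 2 := mul_le_mul e1 e2 (abs_nonneg _) (le_of_lt hC'pos)
    have habs := absCondexp (m := mV L) hWft
    have hCft : Integrable (fun ω => C' * |ft ω|) μ := hftint.abs.const_mul C'
    have hmono : μ[(fun ω => |W ω * ft ω|)|(mV L)] ≤ᵐ[μ] μ[(fun ω => C' * |ft ω|)|(mV L)] := by
      refine condExp_mono hWft.abs hCft ?_
      filter_upwards [hC'] with ω e1
      calc |W ω * ft ω| = |W ω| * |ft ω| := abs_mul _ _
        _ ≤ C' * |ft ω| := mul_le_mul_of_nonneg_right e1 (abs_nonneg _)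
    have hsmul : μ[(fun ω => C' * |ft ω|)|(mV L)]
        =ᵐ[μ] fun ω => C' * (μ[(fun ω => |ft ω|)|(mV L)]) ω := by
      have := condExp_smul (μ := μ) (m := mV L) C' (fun ω => |ft ω|)
      simpa [Pi.smul_def, smul_eq_mul] using this
    set e : ℝ := ε₀ / C' with he_def
    have hepos : 0 < e := div_pos hε₀ hC'pos
    have helb : ∀ᵐ ω ∂μ, e ≤ (μ[(fun ω => |ft ω|)|(mV L)]) ω := by
      filter_upwards [hcov, hkey, habs, hmono, hsmul] with ω e1 e2 e3 e4 e5
      rw [e2] at e1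
      have : ε₀ ≤ C' * (μ[(fun ω => |ft ω|)|(mV L)]) ω := by
        calc ε₀ ≤ |(μ[(fun ω => W ω * ft ω)|(mV L)]) ω| := e1
          _ ≤ (μ[(fun ω => |W ω * ft ω|)|(mV L)]) ω := e3
          _ ≤ (μ[(fun ω => C' * |ft ω|)|(mV L)]) ω := e4
          _ = C' * (μ[(fun ω => |ft ω|)|(mV L)]) ω := e5
      rw [he_def]
      exact (div_le_iff₀' hC'pos).mpr this
    -- quadratic lower bound
    have hlin : Integrable (fun ω => 2 * e * |ft ω| - e ^ 2) μ :=
      (hftint.abs.const_mul (2 * e)).sub (integrable_const (e ^ 2))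
    have hquad : μ[(fun ω => 2 * e * |ft ω| - e ^ 2)|(mV L)] ≤ᵐ[μ] μ[(fun ω => ft ω * ft ω)|(mV L)] := by
      refine condExp_mono hlin hftft (ae_of_all _ fun ω => ?_)
      show 2 * e * |ft ω| - e ^ 2 ≤ ft ω * ft ω
      nlinarith [sq_nonneg (|ft ω| - e), abs_mul_abs_self (ft ω), abs_nonneg (ft ω)]
    have hlineq : μ[(fun ω => 2 * e * |ft ω| - e ^ 2)|(mV L)]
        =ᵐ[μ] fun ω => 2 * e * (μ[(fun ω => |ft ω|)|(mV L)]) ω - e ^ 2 := by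
      have h1 : (fun ω => 2 * e * |ft ω| - e ^ 2)
          = (fun ω => 2 * e * |ft ω|) - fun _ => e ^ 2 := rfl
      rw [h1]
      have h2 : μ[(fun ω => 2 * e * |ft ω|) - (fun _ => e ^ 2)|(mV L)]
          =ᵐ[μ] μ[(fun ω => 2 * e * |ft ω|)|(mV L)] - μ[(fun _ : Ω => e ^ 2)|(mV L)] :=
        condExp_sub (hftint.abs.const_mul (2 * e)) (integrable_const _) (mV L)
      have h3 : μ[(fun ω => 2 * e * |ft ω|)|(mV L)]
          =ᵐ[μ] fun ω => 2 * e * (μ[(fun ω => |ft ω|)|(mV L)]) ω := by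
        have := condExp_smul (μ := μ) (m := mV L) (2 * e) (fun ω => |ft ω|)
        simpa [Pi.smul_def, smul_eq_mul] using this
      have h4 : μ[(fun _ : Ω => e ^ 2)|(mV L)] = fun _ => e ^ 2 := condExp_const hm _
      filter_upwards [h2, h3] with ω e2 e3
      simp only [Pi.sub_apply] at e2 ⊢
      rw [e2, e3, h4]
    refine ⟨e ^ 2, by positivity, ?_⟩
    filter_upwards [hvar, hquad, hlineq, helb] with ω e1 e2 e3 e4
    rw [e1]
    rw [e3] at e2
    nlinarith
  -- the backward half producing the RWF (μ[A|(mV Z ⊔ mV L)] itself)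
  have toRWF : (∃ ε₀' : ℝ, 0 < ε₀' ∧ ∀ᵐ ω ∂μ, ε₀' ≤ condCov μ (mV L) f f ω) →
      IsRWF μ (mV L) A f := by
    rintro ⟨ε', hε', hvlb⟩
    refine ⟨⟨1, hfbd⟩, ε', hε', ?_⟩
    filter_upwards [hAf, hvlb] with ω h1 h2
    rw [h1]
    exact h2.trans (le_abs_self _)
  -- backward: construct a factored π
  have bwd : (∃ ε₀' : ℝ, 0 < ε₀' ∧ ∀ᵐ ω ∂μ, ε₀' ≤ condCov μ (mV L) f f ω) →
      ∃ π : ℝ → ℝ → ℝ, (Measurable fun p : ℝ × ℝ => π p.1 p.2) ∧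
        IsRWF μ (mV L) A (fun ω => π (Z ω) (L ω)) := by
    rintro ⟨ε', hε', hvlb⟩
    set f' : Ω → ℝ := fun ω => max 0 (min (f ω) 1) with hf'_def
    have hf'01 : ∀ ω, 0 ≤ f' ω ∧ f' ω ≤ 1 := fun ω =>
      ⟨le_max_left _ _, max_le zero_le_one (min_le_right _ _)⟩
    have hf0 : (0 : Ω → ℝ) ≤ᵐ[μ] f := by
      rw [hf_def]
      exact condExp_nonneg (ae_of_all _ fun ω => by
        rcases hA01 ω with h | h <;> simp [h, Pi.zero_apply])
    have hf'ae : f' =ᵐ[μ] f := by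
      filter_upwards [hfbd, hf0] with ω h1 h2
      have h3 : f ω ≤ 1 := (abs_le.mp h1).2
      have h4 : (0:ℝ) ≤ f ω := h2
      simp [hf'_def, min_eq_left h3, max_eq_right h4]
    have hf'meas : Measurable[MeasurableSpace.comap P inferInstance] f' := by
      rw [← hcomap]
      exact measurable_const.max (hfSM.measurable.min measurable_const)
    obtain ⟨h, hhm, hh⟩ := doobDynkin hf'meas hf'01
    refine ⟨fun z l => h (z, l), by simpa using hhm, ?_⟩
    have hfun : (fun ω => h (Z ω, L ω)) = f' := funext fun ω => hh ω
    rw [hfun]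
    -- condCov congr
    have hcc : condCov μ (mV L) A f' =ᵐ[μ] condCov μ (mV L) A f := by
      have c1 : μ[A * f'|(mV L)] =ᵐ[μ] μ[A * f|(mV L)] :=
        condExp_congr_ae (hf'ae.mono fun ω hω => by simp [Pi.mul_apply, hω])
      have c2 : μ[f'|(mV L)] =ᵐ[μ] μ[f|(mV L)] := condExp_congr_ae hf'ae
      filter_upwards [c1, c2] with ω e1 e2
      simp only [condCov, Pi.sub_apply, Pi.mul_apply] at e1 e2 ⊢
      rw [e1, e2]
    refine ⟨⟨1, ae_of_all _ fun ω => abs_le.mpr ⟨by linarith [(hf'01 ω).1], (hf'01 ω).2⟩⟩,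
      ε', hε', ?_⟩
    filter_upwards [hcc, hAf, hvlb] with ω e1 e2 e3
    rw [e1, e2]
    exact e3.trans (le_abs_self _)
  exact ⟨⟨fwd, bwd⟩, fun hπ => toRWF (fwd hπ)⟩
end

section
/- (Closed form of NPIV solution) Suppose f°(A⁽ᵃ⁾, L) solves E[A⁽ᵃ⁾ Y | Z,L] = E[f°(A⁽ᵃ⁾,L) | Z,L], and π(Z,L) is bounded with Cov(A⁽ᵃ⁾, π(Z,L) | L) ≠ 0. Then f°(1,L) − f°(0,L) = Cov(A⁽ᵃ⁾ Y, π(Z,L) | L) / Cov(A⁽ᵃ⁾, π(Z,L) | L), and f°(0,L) = E[A⁽ᵃ⁾ Y | Z,L] − (f°(1,L)−f°(0,L))·E[A⁽ᵃ⁾ | Z,L]. -/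
open MeasureTheory ProbabilityTheory

/-- Decomposition lemma: for `m'`-measurable `c0, c1`,
`E[c0·(1-B)·W + c1·B·W | m'] = c0·(E[W|m'] - E[BW|m']) + c1·E[BW|m']`. -/
private lemma decomp_aux {Ω : Type*} [mΩ : MeasurableSpace Ω] (μ : Measure Ω)
    [IsProbabilityMeasure μ] {m' : MeasurableSpace Ω} (hm' : m' ≤ mΩ)
    (c0 c1 B W : Ω → ℝ)
    (hc0 : StronglyMeasurable[m'] c0) (hc1 : StronglyMeasurable[m'] c1)
    (i0 : Integrable (fun ω => c0 ω * ((1 - B ω) * W ω)) μ)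
    (i1 : Integrable (fun ω => c1 ω * (B ω * W ω)) μ)
    (iW : Integrable W μ) (iBW : Integrable (fun ω => B ω * W ω) μ) :
    μ[fun ω => c0 ω * ((1 - B ω) * W ω) + c1 ω * (B ω * W ω) | m']
      =ᵐ[μ] fun ω => c0 ω * ((μ[W | m']) ω - (μ[fun ω' => B ω' * W ω' | m']) ω)
        + c1 ω * (μ[fun ω' => B ω' * W ω' | m']) ω := by
  have i1B : Integrable (fun ω => (1 - B ω) * W ω) μ := by
    refine (iW.sub iBW).congr (ae_of_all _ fun ω => ?_)
    simp only [Pi.sub_apply]; ring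
  have h0 : μ[fun ω => c0 ω * ((1 - B ω) * W ω) | m']
      =ᵐ[μ] fun ω => c0 ω * (μ[fun ω' => (1 - B ω') * W ω' | m']) ω :=
    condExp_mul_of_stronglyMeasurable_left hc0 i0 i1B
  have h1 : μ[fun ω => c1 ω * (B ω * W ω) | m']
      =ᵐ[μ] fun ω => c1 ω * (μ[fun ω' => B ω' * W ω' | m']) ω :=
    condExp_mul_of_stronglyMeasurable_left hc1 i1 iBW
  have hsubc : μ[fun ω' => (1 - B ω') * W ω' | m']
      =ᵐ[μ] μ[W | m'] - μ[fun ω' => B ω' * W ω' | m'] := by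
    have he : (fun ω' => (1 - B ω') * W ω') =ᵐ[μ] W - fun ω' => B ω' * W ω' :=
      ae_of_all _ fun ω => by simp only [Pi.sub_apply]; ring
    exact (condExp_congr_ae he).trans (condExp_sub iW iBW _)
  refine (condExp_add i0 i1 _).trans ?_
  filter_upwards [h0, h1, hsubc] with ω e0 e1 es
  simp only [Pi.add_apply, Pi.sub_apply] at *
  rw [e0, e1, es]

/-- (Closed form of the NPIV solution.) If `f°` solves
`E[B·Y | Z,L] = E[f°(B,L) | Z,L]` with `B = 1{A=a}`, and `π(Z,L)` is bounded with
`Cov(B, π(Z,L) | L) ≠ 0`, then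
`f°(1,L) − f°(0,L) = Cov(B·Y, π(Z,L)|L) / Cov(B, π(Z,L)|L)` and
`f°(0,L) = E[B·Y|Z,L] − (f°(1,L)−f°(0,L))·E[B|Z,L]` almost surely. -/
theorem stmt6 {Ω : Type*} [mΩ : MeasurableSpace Ω]
    (μ : Measure Ω) [IsProbabilityMeasure μ]
    (A Y Z L : Ω → ℝ) (a : ℝ)
    (hA : Measurable A) (hY : Measurable Y) (hZ : Measurable Z) (hL : Measurable L)
    (B : Ω → ℝ) (hB : B = fun ω => if A ω = a then (1 : ℝ) else 0)
    (f : ℝ → ℝ → ℝ) (hf : Measurable fun p : ℝ × ℝ => f p.1 p.2)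
    (hintBY : Integrable (fun ω => B ω * Y ω) μ)
    (hintf : Integrable (fun ω => f (B ω) (L ω)) μ)
    (hsol : μ[fun ω => B ω * Y ω | mV Z ⊔ mV L]
      =ᵐ[μ] μ[fun ω => f (B ω) (L ω) | mV Z ⊔ mV L])
    (π : ℝ → ℝ → ℝ) (hπ : Measurable fun p : ℝ × ℝ => π p.1 p.2)
    (Cπ : ℝ) (hπbd : ∀ z l, |π z l| ≤ Cπ)
    (hcov : ∀ᵐ ω ∂μ,
      condCov μ (mV L) B (fun ω' => π (Z ω') (L ω')) ω ≠ 0) :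
    ((fun ω => f 1 (L ω) - f 0 (L ω))
      =ᵐ[μ] fun ω =>
        condCov μ (mV L) (fun ω' => B ω' * Y ω') (fun ω' => π (Z ω') (L ω')) ω /
          condCov μ (mV L) B (fun ω' => π (Z ω') (L ω')) ω)
    ∧ ((fun ω => f 0 (L ω))
      =ᵐ[μ] fun ω =>
        (μ[fun ω' => B ω' * Y ω' | mV Z ⊔ mV L]) ω -
          (f 1 (L ω) - f 0 (L ω)) * (μ[B | mV Z ⊔ mV L]) ω) := by
  classical
  -- basic σ-algebra facts
  have hmLle : mV L ≤ mΩ := measurable_iff_comap_le.mp hL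
  have hmle : mV Z ⊔ mV L ≤ mΩ :=
    sup_le (measurable_iff_comap_le.mp hZ) hmLle
  have hLm : mV L ≤ mV Z ⊔ mV L := le_sup_right
  haveI : SigmaFinite (μ.trim hmle) := inferInstance
  haveI : SigmaFinite (μ.trim hmLle) := inferInstance
  -- measurability
  have hBmeas : Measurable B := by
    rw [hB]
    exact Measurable.ite (hA (measurableSet_singleton a)) measurable_const measurable_const
  have hLmL : Measurable[mV L] L := measurable_iff_comap_le.mpr le_rfl
  have hZm : Measurable[mV Z ⊔ mV L] Z := measurable_iff_comap_le.mpr le_sup_left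
  have hLm' : Measurable[mV Z ⊔ mV L] L := measurable_iff_comap_le.mpr le_sup_right
  have hf0 : Measurable fun l => f 0 l := hf.comp (measurable_const.prodMk measurable_id)
  have hf1 : Measurable fun l => f 1 l := hf.comp (measurable_const.prodMk measurable_id)
  have hf0mL : StronglyMeasurable[mV L] fun ω => f 0 (L ω) :=
    (hf0.comp hLmL).stronglyMeasurable
  have hf1mL : StronglyMeasurable[mV L] fun ω => f 1 (L ω) :=
    (hf1.comp hLmL).stronglyMeasurable
  have hf0m : StronglyMeasurable[mV Z ⊔ mV L] fun ω => f 0 (L ω) := hf0mL.mono hLm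
  have hf1m : StronglyMeasurable[mV Z ⊔ mV L] fun ω => f 1 (L ω) := hf1mL.mono hLm
  have hπmeas : Measurable fun ω => π (Z ω) (L ω) := hπ.comp (hZ.prodMk hL)
  have hπm : StronglyMeasurable[mV Z ⊔ mV L] fun ω => π (Z ω) (L ω) :=
    (hπ.comp (hZm.prodMk hLm')).stronglyMeasurable
  -- pointwise facts about B
  have hB01 : ∀ ω, B ω = 0 ∨ B ω = 1 := by
    intro ω; rw [hB]; by_cases h : A ω = a <;> simp [h]
  -- integrability
  have hintB : Integrable B μ := by
    refine (integrable_const (1 : ℝ)).mono' hBmeas.aestronglyMeasurable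
      (ae_of_all _ fun ω => ?_)
    rcases hB01 ω with h | h <;> simp [h]
  have hintπ : Integrable (fun ω => π (Z ω) (L ω)) μ := by
    refine (integrable_const Cπ).mono' hπmeas.aestronglyMeasurable
      (ae_of_all _ fun ω => ?_)
    simpa [Real.norm_eq_abs] using hπbd (Z ω) (L ω)
  have iX0 : Integrable (fun ω => f 0 (L ω) * (1 - B ω)) μ := by
    refine hintf.abs.mono' (((hf0.comp hL).mul
      (measurable_const.sub hBmeas)).aestronglyMeasurable) (ae_of_all _ fun ω => ?_)
    rcases hB01 ω with h | h <;> simp [h, Real.norm_eq_abs]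
  have iX1 : Integrable (fun ω => f 1 (L ω) * B ω) μ := by
    refine hintf.abs.mono' (((hf1.comp hL).mul hBmeas).aestronglyMeasurable)
      (ae_of_all _ fun ω => ?_)
    rcases hB01 ω with h | h <;> simp [h, Real.norm_eq_abs]
  have πmul : ∀ {X : Ω → ℝ}, Integrable X μ →
      Integrable (fun ω => π (Z ω) (L ω) * X ω) μ := fun {X} hX =>
    hX.bdd_mul (c := Cπ) hπmeas.aestronglyMeasurable
      (ae_of_all _ fun ω => by simpa [Real.norm_eq_abs] using hπbd (Z ω) (L ω))
  have iBπ : Integrable (fun ω => B ω * π (Z ω) (L ω)) μ := by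
    refine hintπ.bdd_mul (c := 1) hBmeas.aestronglyMeasurable
      (ae_of_all _ fun ω => ?_)
    rcases hB01 ω with h | h <;> simp [h]
  have i0π : Integrable (fun ω => f 0 (L ω) * ((1 - B ω) * π (Z ω) (L ω))) μ :=
    (πmul iX0).congr (ae_of_all _ fun ω => by ring)
  have i1π : Integrable (fun ω => f 1 (L ω) * (B ω * π (Z ω) (L ω))) μ :=
    (πmul iX1).congr (ae_of_all _ fun ω => by ring)
  have i0c : Integrable (fun ω => f 0 (L ω) * ((1 - B ω) * 1)) μ :=
    iX0.congr (ae_of_all _ fun ω => by ring)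
  have i1c : Integrable (fun ω => f 1 (L ω) * (B ω * 1)) μ :=
    iX1.congr (ae_of_all _ fun ω => by ring)
  have iB1 : Integrable (fun ω => B ω * (1 : ℝ)) μ :=
    hintB.congr (ae_of_all _ fun ω => (mul_one _).symm)
  have iπBY : Integrable (fun ω => π (Z ω) (L ω) * (B ω * Y ω)) μ := πmul hintBY
  have iπf : Integrable (fun ω => π (Z ω) (L ω) * f (B ω) (L ω)) μ := πmul hintf
  -- decomposition of f(B,L) (pointwise)
  have hdec1 : (fun ω => f (B ω) (L ω)) =ᵐ[μ]
      fun ω => f 0 (L ω) * ((1 - B ω) * 1) + f 1 (L ω) * (B ω * 1) :=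
    ae_of_all _ fun ω => by rcases hB01 ω with h | h <;> simp [h]
  have hdecπ : (fun ω => f (B ω) (L ω) * π (Z ω) (L ω)) =ᵐ[μ]
      fun ω => f 0 (L ω) * ((1 - B ω) * π (Z ω) (L ω))
        + f 1 (L ω) * (B ω * π (Z ω) (L ω)) :=
    ae_of_all _ fun ω => by rcases hB01 ω with h | h <;> simp [h]
  -- key identity at level m = mV Z ⊔ mV L
  have hB1m : μ[fun ω' => B ω' * (1 : ℝ) | mV Z ⊔ mV L] =ᵐ[μ] μ[B | mV Z ⊔ mV L] :=
    condExp_congr_ae (ae_of_all _ fun ω => mul_one _)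
  have hconstm : μ[fun _ : Ω => (1 : ℝ) | mV Z ⊔ mV L] = fun _ => 1 :=
    condExp_const hmle 1
  have keyM : μ[fun ω' => B ω' * Y ω' | mV Z ⊔ mV L] =ᵐ[μ]
      fun ω => f 0 (L ω) + (f 1 (L ω) - f 0 (L ω)) * (μ[B | mV Z ⊔ mV L]) ω := by
    refine hsol.trans ((condExp_congr_ae hdec1).trans
      ((decomp_aux μ hmle _ _ B (fun _ => (1 : ℝ)) hf0m hf1m i0c i1c
        (integrable_const 1) iB1).trans ?_))
    filter_upwards [hB1m] with ω hb
    rw [hconstm, hb]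
    ring
  -- tower identities at level mV L
  have tBY : μ[fun ω' => B ω' * Y ω' | mV L] =ᵐ[μ]
      μ[fun ω => f (B ω) (L ω) | mV L] :=
    ((condExp_condExp_of_le hLm hmle).symm.trans
      (condExp_congr_ae hsol)).trans (condExp_condExp_of_le hLm hmle)
  have pullm : μ[fun ω => π (Z ω) (L ω) * (B ω * Y ω) | mV Z ⊔ mV L] =ᵐ[μ]
      fun ω => π (Z ω) (L ω) * (μ[fun ω' => B ω' * Y ω' | mV Z ⊔ mV L]) ω :=
    condExp_mul_of_stronglyMeasurable_left hπm iπBY hintBY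
  have pullm2 : μ[fun ω => π (Z ω) (L ω) * f (B ω) (L ω) | mV Z ⊔ mV L] =ᵐ[μ]
      fun ω => π (Z ω) (L ω) * (μ[fun ω' => f (B ω') (L ω') | mV Z ⊔ mV L]) ω :=
    condExp_mul_of_stronglyMeasurable_left hπm iπf hintf
  have cM : μ[fun ω => B ω * Y ω * π (Z ω) (L ω) | mV Z ⊔ mV L] =ᵐ[μ]
      μ[fun ω => f (B ω) (L ω) * π (Z ω) (L ω) | mV Z ⊔ mV L] := by
    refine ((condExp_congr_ae (ae_of_all _ fun ω => mul_comm (B ω * Y ω)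
      (π (Z ω) (L ω)))).trans (pullm.trans ?_)).trans
      ((condExp_congr_ae (ae_of_all _ fun ω => mul_comm (f (B ω) (L ω))
        (π (Z ω) (L ω)))).trans pullm2).symm
    filter_upwards [hsol] with ω h
    rw [h]
  have tBYπ : μ[fun ω => B ω * Y ω * π (Z ω) (L ω) | mV L] =ᵐ[μ]
      μ[fun ω => f (B ω) (L ω) * π (Z ω) (L ω) | mV L] :=
    ((condExp_condExp_of_le hLm hmle).symm.trans
      (condExp_congr_ae cM)).trans (condExp_condExp_of_le hLm hmle)
  -- closed forms at level mV L
  have E1 : μ[(fun ω' => B ω' * Y ω') * (fun ω' => π (Z ω') (L ω')) | mV L] =ᵐ[μ]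
      fun ω => f 0 (L ω) * ((μ[fun ω' => π (Z ω') (L ω') | mV L]) ω
          - (μ[fun ω' => B ω' * π (Z ω') (L ω') | mV L]) ω)
        + f 1 (L ω) * (μ[fun ω' => B ω' * π (Z ω') (L ω') | mV L]) ω := by
    refine tBYπ.trans ((condExp_congr_ae hdecπ).trans ?_)
    exact decomp_aux μ hmLle _ _ B (fun ω' => π (Z ω') (L ω')) hf0mL hf1mL
      i0π i1π hintπ iBπ
  have hB1mL : μ[fun ω' => B ω' * (1 : ℝ) | mV L] =ᵐ[μ] μ[B | mV L] :=
    condExp_congr_ae (ae_of_all _ fun ω => mul_one _)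
  have hconstmL : μ[fun _ : Ω => (1 : ℝ) | mV L] = fun _ => 1 :=
    condExp_const hmLle 1
  have E2 : μ[fun ω' => B ω' * Y ω' | mV L] =ᵐ[μ]
      fun ω => f 0 (L ω) * (1 - (μ[B | mV L]) ω)
        + f 1 (L ω) * (μ[B | mV L]) ω := by
    refine tBY.trans ((condExp_congr_ae hdec1).trans
      ((decomp_aux μ hmLle _ _ B (fun _ => (1 : ℝ)) hf0mL hf1mL i0c i1c
        (integrable_const 1) iB1).trans ?_))
    filter_upwards [hB1mL] with ω hb
    rw [hconstmL, hb]
  -- condCov identity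
  have eBYπ : μ[(fun ω' => B ω' * Y ω') * (fun ω' => π (Z ω') (L ω')) | mV L]
      = μ[fun ω => B ω * Y ω * π (Z ω) (L ω) | mV L] := rfl
  have eBπ : μ[B * (fun ω' => π (Z ω') (L ω')) | mV L]
      = μ[fun ω' => B ω' * π (Z ω') (L ω') | mV L] := rfl
  have covEq : ∀ᵐ ω ∂μ,
      condCov μ (mV L) (fun ω' => B ω' * Y ω') (fun ω' => π (Z ω') (L ω')) ω
        = (f 1 (L ω) - f 0 (L ω)) *
            condCov μ (mV L) B (fun ω' => π (Z ω') (L ω')) ω := by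
    filter_upwards [E1, E2] with ω e1 e2
    simp only [condCov, Pi.sub_apply, Pi.mul_apply]
    rw [eBπ]
    have e1' : (μ[(fun ω' => B ω' * Y ω') * (fun ω' => π (Z ω') (L ω')) | mV L]) ω
        = f 0 (L ω) * ((μ[fun ω' => π (Z ω') (L ω') | mV L]) ω
            - (μ[fun ω' => B ω' * π (Z ω') (L ω') | mV L]) ω)
          + f 1 (L ω) * (μ[fun ω' => B ω' * π (Z ω') (L ω') | mV L]) ω := e1
    rw [e1', e2]
    ring
  constructor
  · filter_upwards [covEq, hcov] with ω h hne
    rw [h, mul_div_assoc, div_self hne, mul_one]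
  · filter_upwards [keyM] with ω h
    rw [h]
    ring
end
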